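/- arXiv:1905.11621 — 8 statements merged into one kernel-verified Lean document; each statement's English description precedes it below -/
import Mathlib

section
/- There is no nonzero linear functional γ on ℓ∞ that is continuous and symmetric, i.e., satisfying γ(x∘σ) = γ(x) for every x ∈ ℓ∞ and every permutation σ of ℕ. -/
open BoundedContinuousFunction

/-- Compose a bounded sequence with a map `ℕ → ℕ`. -/
private noncomputable def bcfComp (x : BoundedContinuousFunction ℕ ℝ) (σ : ℕ → ℕ) :
    BoundedContinuousFunction ℕ ℝ :=
  x.compContinuous ⟨σ, continuous_of_discreteTopology⟩

@[simp] private lemma bcfComp_apply (x : BoundedContinuousFunction ℕ ℝ) (σ : ℕ → ℕ) (n : ℕ) :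
    bcfComp x σ n = x (σ n) := rfl

/-- Given two predicates on ℕ with infinite truth and falsity sets, there is a permutation
matching them. -/
private lemma exists_perm_iff (p q : ℕ → Prop) [DecidablePred p] [DecidablePred q]
    (h1 : Infinite {n // p n}) (h2 : Infinite {n // ¬ p n})
    (h3 : Infinite {n // q n}) (h4 : Infinite {n // ¬ q n}) :
    ∃ σ : Equiv.Perm ℕ, ∀ n, q (σ n) ↔ p n := by
  letI := Denumerable.ofEncodableOfInfinite {n // p n}
  letI := Denumerable.ofEncodableOfInfinite {n // ¬ p n}
  letI := Denumerable.ofEncodableOfInfinite {n // q n}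
  letI := Denumerable.ofEncodableOfInfinite {n // ¬ q n}
  let e1 : {n // p n} ≃ {n // q n} := (Denumerable.eqv _).trans (Denumerable.eqv _).symm
  let e2 : {n // ¬ p n} ≃ {n // ¬ q n} := (Denumerable.eqv _).trans (Denumerable.eqv _).symm
  refine ⟨Equiv.subtypeCongr e1 e2, fun n => ?_⟩
  by_cases hp : p n
  · simp only [Equiv.subtypeCongr, Equiv.trans_apply,
      Equiv.sumCompl_symm_apply_of_pos hp, Equiv.sumCongr_apply, Sum.map_inl,
      Equiv.sumCompl_apply_inl]
    exact iff_of_true (e1 ⟨n, hp⟩).2 hp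
  · simp only [Equiv.subtypeCongr, Equiv.trans_apply,
      Equiv.sumCompl_symm_apply_of_neg hp, Equiv.sumCongr_apply, Sum.map_inr,
      Equiv.sumCompl_apply_inr]
    exact iff_of_false (e2 ⟨n, hp⟩).2 hp

private lemma gamma_vanishes_on_even_supported
    (γ : BoundedContinuousFunction ℕ ℝ →L[ℝ] ℝ)
    (hsym : ∀ (x y : BoundedContinuousFunction ℕ ℝ) (σ : Equiv.Perm ℕ),
      (∀ n, y n = x (σ n)) → γ y = γ x)
    (u : BoundedContinuousFunction ℕ ℝ) (h0 : ∀ n, ¬ Even n → u n = 0) :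
    γ u = 0 := by
  have key : ∀ N : ℕ, 2 ≤ N → (N : ℝ) * |γ u| ≤ ‖γ‖ * ‖u‖ := by
    intro N hN
    -- for each j < N, a permutation σ j with Even (σ j n) ↔ n % N = j
    have hEx : ∀ j : ℕ, ∃ σ : Equiv.Perm ℕ, j < N → ∀ n, Even (σ n) ↔ n % N = j := by
      intro j
      by_cases hj : j < N
      · haveI h1 : Infinite {n // n % N = j} := by
          refine Infinite.of_injective (fun m : ℕ => ⟨N * m + j, by
            simp [Nat.mul_add_mod, Nat.mod_eq_of_lt hj]⟩) ?_
          intro a b hab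
          have h' : N * a + j = N * b + j := congrArg Subtype.val hab
          exact Nat.eq_of_mul_eq_mul_left (by omega) (Nat.add_right_cancel h')
        haveI h2 : Infinite {n // ¬ n % N = j} := by
          set k : ℕ := if j = 0 then 1 else 0 with hk
          have hkj : k ≠ j := by by_cases h : j = 0 <;> simp [hk, h] <;> omega
          have hkN : k < N := by by_cases h : j = 0 <;> simp [hk, h] <;> omega
          refine Infinite.of_injective (fun m : ℕ => ⟨N * m + k, by
            rw [Nat.mul_add_mod, Nat.mod_eq_of_lt hkN]; exact hkj⟩) ?_
          intro a b hab
          have h' : N * a + k = N * b + k := congrArg Subtype.val hab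
          exact Nat.eq_of_mul_eq_mul_left (by omega) (Nat.add_right_cancel h')
        haveI h3 : Infinite {n // Even n} :=
          Infinite.of_injective (fun m : ℕ => (⟨2 * m, ⟨m, by ring⟩⟩ : {n // Even n}))
            (fun a b hab => by
              have h' : 2 * a = 2 * b := congrArg Subtype.val hab; omega)
        haveI h4 : Infinite {n // ¬ Even n} :=
          Infinite.of_injective (fun m : ℕ => (⟨2 * m + 1, by simp [Nat.even_add_one, parity_simps]⟩ :
            {n // ¬ Even n}))
            (fun a b hab => by
              have h' : 2 * a + 1 = 2 * b + 1 := congrArg Subtype.val hab; omega)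
        obtain ⟨σ, hσ⟩ := exists_perm_iff (fun n => n % N = j) Even h1 h2 h3 h4
        exact ⟨σ, fun _ => hσ⟩
      · exact ⟨1, fun h => absurd h hj⟩
    choose σ hσ using hEx
    -- the spread copies
    set s : BoundedContinuousFunction ℕ ℝ :=
      ∑ j ∈ Finset.range N, bcfComp u (σ j) with hs
    have hγs : γ s = (N : ℝ) * γ u := by
      rw [hs, map_sum]
      have : ∀ j ∈ Finset.range N, γ (bcfComp u (σ j)) = γ u := fun j _ =>
        hsym u (bcfComp u (σ j)) (σ j) (fun n => rfl)
      rw [Finset.sum_congr rfl this, Finset.sum_const, Finset.card_range, nsmul_eq_mul]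
    have hnorm : ‖s‖ ≤ ‖u‖ := by
      refine (norm_le (norm_nonneg u)).2 fun n => ?_
      have hsn : s n = u (σ (n % N) n) := by
        rw [hs]
        rw [BoundedContinuousFunction.coe_sum, Finset.sum_apply]
        refine Finset.sum_eq_single_of_mem (n % N)
          (Finset.mem_range.2 (Nat.mod_lt _ (by omega))) ?_
        intro j hj hjn
        have hjN := Finset.mem_range.1 hj
        refine h0 _ ?_
        intro hev
        exact hjn (((hσ j hjN n).1 hev).symm ▸ rfl)
      rw [hsn]
      exact norm_coe_le_norm u _
    have h1 : |γ s| ≤ ‖γ‖ * ‖u‖ :=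
      (γ.le_opNorm s).trans (by
        exact mul_le_mul_of_nonneg_left hnorm (norm_nonneg γ))
    calc (N : ℝ) * |γ u| = |γ s| := by rw [hγs, abs_mul, Nat.abs_cast]
    _ ≤ ‖γ‖ * ‖u‖ := h1
  by_contra hne
  have hpos : 0 < |γ u| := abs_pos.2 hne
  obtain ⟨N, hN⟩ := exists_nat_gt ((‖γ‖ * ‖u‖) / |γ u|)
  have h2 : (max N 2 : ℕ) ≥ N := le_max_left _ _
  have := key (max N 2) (le_max_right _ _)
  have hNN : ((max N 2 : ℕ) : ℝ) > (‖γ‖ * ‖u‖) / |γ u| :=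
    lt_of_lt_of_le hN (by exact_mod_cast h2)
  have : (‖γ‖ * ‖u‖) / |γ u| * |γ u| < ((max N 2 : ℕ) : ℝ) * |γ u| :=
    mul_lt_mul_of_pos_right hNN hpos
  rw [div_mul_cancel₀ _ (ne_of_gt hpos)] at this
  linarith

private noncomputable def evenPart (x : BoundedContinuousFunction ℕ ℝ) :
    BoundedContinuousFunction ℕ ℝ :=
  BoundedContinuousFunction.ofNormedAddCommGroup
    (fun n => if Even n then x n else 0) continuous_of_discreteTopology ‖x‖
    (fun n => by
      split
      · exact norm_coe_le_norm x n
      · simpa using norm_nonneg x)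

@[simp] private lemma evenPart_apply (x : BoundedContinuousFunction ℕ ℝ) (n : ℕ) :
    evenPart x n = if Even n then x n else 0 := rfl

private def paritySwap : Equiv.Perm ℕ :=
  Function.Involutive.toPerm (fun n => if Even n then n + 1 else n - 1)
    (by
      intro n
      rcases Nat.even_or_odd n with h | h
      · simp [h, Nat.even_add_one]
      · have h' : ¬ Even n := Nat.not_even_iff_odd.2 h
        have h1 : 1 ≤ n := h.pos
        have : Even (n - 1) := by
          rcases h with ⟨k, hk⟩; exact ⟨k, by omega⟩
        simp [h', this]
        omega)

private lemma paritySwap_apply (n : ℕ) :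
    paritySwap n = if Even n then n + 1 else n - 1 := rfl

/-- There is no nonzero continuous symmetric linear functional on `ℓ∞`
(the space of bounded real sequences, here `BoundedContinuousFunction ℕ ℝ`):
if `γ` is continuous, linear and satisfies `γ (x ∘ σ) = γ x` for every bounded
sequence `x` and every permutation `σ` of `ℕ`, then `γ = 0`. -/
theorem no_symmetric_functional_on_linfty
    (γ : BoundedContinuousFunction ℕ ℝ →L[ℝ] ℝ)
    (hsym : ∀ (x y : BoundedContinuousFunction ℕ ℝ) (σ : Equiv.Perm ℕ),
      (∀ n, y n = x (σ n)) → γ y = γ x) :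
    γ = 0 := by
  ext x
  simp only [ContinuousLinearMap.zero_apply]
  set u := evenPart x with hu
  set v := x - u with hv
  have hveven : ∀ n, Even n → v n = 0 := by
    intro n hn
    simp [hv, hu, hn]
  have hγu : γ u = 0 := by
    refine gamma_vanishes_on_even_supported γ hsym u fun n hn => ?_
    simp [hu, hn]
  have hγv : γ v = 0 := by
    have h1 : γ (bcfComp v paritySwap) = γ v :=
      hsym v (bcfComp v paritySwap) paritySwap (fun n => rfl)
    rw [← h1]
    refine gamma_vanishes_on_even_supported γ hsym _ fun n hn => ?_
    have hodd : Odd n := Nat.not_even_iff_odd.1 hn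
    have : Even (paritySwap n) := by
      rw [paritySwap_apply, if_neg hn]
      rcases hodd with ⟨k, hk⟩
      exact ⟨k, by omega⟩
    simpa using hveven _ this
  have : γ x = γ u + γ v := by rw [hv, map_sub]; ring
  rw [this, hγu, hγv, add_zero]
end

section
/- If γ is a continuous symmetric linear functional on ℓ∞, then γ vanishes on every sequence of 0's and 1's that has infinitely many 0's and infinitely many 1's. -/
/-!
Some permutation of `ℕ` carries any infinite, coinfinite set onto any other, so a symmetric
functional takes one common value on the indicators of all such sets. Splitting an infinite,
coinfinite `s` into two disjoint infinite pieces `t ∪ u` (both again coinfinite), additivity gives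
`γ 1_s = γ 1_t + γ 1_u = 2 γ 1_s`, hence `γ 1_s = 0`; a 0-1 sequence is the indicator of its
set of ones.
-/

open Cardinal

theorem Equiv.Perm.exists_preimage_eq_of_mk_eq {α : Type*} {s t : Set α} (h : #t = #s)
    (hc : #(tᶜ : Set α) = #(sᶜ : Set α)) : ∃ σ : Equiv.Perm α, σ ⁻¹' s = t := by
  classical
  obtain ⟨e⟩ := Cardinal.eq.1 h
  obtain ⟨f⟩ := Cardinal.eq.1 hc
  refine ⟨Equiv.subtypeCongr e f, Set.ext fun a => ?_⟩
  by_cases ha : a ∈ t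
  · simp [Equiv.subtypeCongr, Equiv.sumCompl_symm_apply_of_pos ha, ha]
  · simp only [Equiv.subtypeCongr, Equiv.trans_apply, Equiv.sumCompl_symm_apply_of_neg ha,
      Equiv.sumCongr_apply, Sum.map_inr, Equiv.sumCompl_apply_inr, Set.mem_preimage, ha, iff_false]
    exact (f ⟨a, ha⟩).2

theorem Set.Infinite.mk_eq_aleph0 {α : Type*} [Countable α] {s : Set α} (hs : s.Infinite) :
    #s = ℵ₀ :=
  have := hs.to_subtype
  Cardinal.mk_eq_aleph0 s

theorem Set.Infinite.exists_union_disjoint_infinite {α : Type*} {s : Set α} (hs : s.Infinite) :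
    ∃ t u : Set α, t ∪ u = s ∧ Disjoint t u ∧ t.Infinite ∧ u.Infinite := by
  obtain ⟨t, u, htu, hdisj, hcard⟩ := hs.exists_union_disjoint_cardinal_eq_of_infinite
  have infinite_iff_aleph0_le (v : Set α) : v.Infinite ↔ ℵ₀ ≤ #v := by
    rw [← Set.infinite_coe_iff, Cardinal.infinite_iff]
  have hinf : t.Infinite ∨ u.Infinite := Set.infinite_union.1 (htu ▸ hs)
  rw [infinite_iff_aleph0_le, infinite_iff_aleph0_le, hcard, or_self] at hinf
  exact ⟨t, u, htu, hdisj, (infinite_iff_aleph0_le t).2 (hcard ▸ hinf),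
    (infinite_iff_aleph0_le u).2 hinf⟩

namespace BoundedContinuousFunction

variable {α : Type*} [TopologicalSpace α] [DiscreteTopology α]

noncomputable def discreteIndicator (s : Set α) : α →ᵇ ℝ :=
  indicator s (isClopen_discrete s)

@[simp]
theorem discreteIndicator_apply (s : Set α) (a : α) : discreteIndicator s a = s.indicator 1 a :=
  rfl

theorem discreteIndicator_union {s t : Set α} (h : Disjoint s t) :
    discreteIndicator (s ∪ t) = discreteIndicator s + discreteIndicator t := by
  ext a
  simp [Set.indicator_union_of_disjoint h]

theorem apply_discreteIndicator_eq_of_mk_eq {M : Type*} {γ : (α →ᵇ ℝ) → M}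
    (hsym : ∀ (x y : α →ᵇ ℝ) (σ : Equiv.Perm α), (∀ n, y n = x (σ n)) → γ y = γ x)
    {s t : Set α} (h : #t = #s) (hc : #(tᶜ : Set α) = #(sᶜ : Set α)) :
    γ (discreteIndicator t) = γ (discreteIndicator s) := by
  obtain ⟨σ, rfl⟩ := Equiv.Perm.exists_preimage_eq_of_mk_eq h hc
  exact hsym _ _ σ fun a => Set.indicator_comp_right (g := 1) σ

theorem apply_discreteIndicator_eq_zero [Countable α] {M : Type*} [AddCommGroup M]
    {γ : (α →ᵇ ℝ) →+ M}
    (hsym : ∀ (x y : α →ᵇ ℝ) (σ : Equiv.Perm α), (∀ n, y n = x (σ n)) → γ y = γ x)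
    {s : Set α} (hs : s.Infinite) (hsc : sᶜ.Infinite) : γ (discreteIndicator s) = 0 := by
  have h_eq {t : Set α} (hts : t ⊆ s) (ht : t.Infinite) :
      γ (discreteIndicator t) = γ (discreteIndicator s) :=
    apply_discreteIndicator_eq_of_mk_eq hsym (by rw [ht.mk_eq_aleph0, hs.mk_eq_aleph0])
      (by rw [(hsc.mono (Set.compl_subset_compl.2 hts)).mk_eq_aleph0, hsc.mk_eq_aleph0])
  obtain ⟨t, u, htu, hdisj, ht, hu⟩ := hs.exists_union_disjoint_infinite
  have hdouble : γ (discreteIndicator s) + γ (discreteIndicator s) = γ (discreteIndicator s) := by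
    calc γ (discreteIndicator s) + γ (discreteIndicator s)
        = γ (discreteIndicator t) + γ (discreteIndicator u) := by
          rw [h_eq (htu ▸ Set.subset_union_left) ht, h_eq (htu ▸ Set.subset_union_right) hu]
      _ = γ (discreteIndicator s) := by rw [← map_add, ← discreteIndicator_union hdisj, htu]
  simpa using hdouble

end BoundedContinuousFunction

open BoundedContinuousFunction in
/-- If `γ` is a continuous symmetric linear functional on `ℓ∞`, then `γ` vanishes on
every sequence of 0's and 1's having infinitely many 0's and infinitely many 1's. -/
theorem symmetric_functional_vanishes_on_01
    (γ : BoundedContinuousFunction ℕ ℝ →L[ℝ] ℝ)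
    (hsym : ∀ (x y : BoundedContinuousFunction ℕ ℝ) (σ : Equiv.Perm ℕ),
      (∀ n, y n = x (σ n)) → γ y = γ x)
    (x : BoundedContinuousFunction ℕ ℝ)
    (h01 : ∀ n, x n = 0 ∨ x n = 1)
    (h0 : {n | x n = 0}.Infinite)
    (h1 : {n | x n = 1}.Infinite) :
    γ x = 0 := by
  have hx : x = discreteIndicator {n | x n = 1} := by
    ext n
    rcases h01 n with h | h <;> simp [h]
  have hcompl : {n | x n = 1}ᶜ = {n | x n = 0} := by
    ext n
    rcases h01 n with h | h <;> simp [h]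
  rw [hx]
  exact apply_discreteIndicator_eq_zero (γ := (γ : BoundedContinuousFunction ℕ ℝ →+ ℝ)) hsym h1
    (hcompl ▸ h0)
end

section
/- If x and y are bounded sequences and there exists an injective map π : ℕ → ℕ with xₙ = y_{π(n)} for all n, then x*ₙ ≤ y*ₙ for all n. -/
open scoped Classical

/-- A Banach sequence space: a subspace of `ℕ → ℝ` with a complete monotone norm
such that the canonical unit vectors have norm one. -/
structure BanachSeqSpace where
  X : Submodule ℝ (ℕ → ℝ)
  N : (ℕ → ℝ) → ℝ
  N_nonneg : ∀ x ∈ X, 0 ≤ N x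
  N_eq_zero : ∀ x ∈ X, N x = 0 → x = 0
  N_add : ∀ x ∈ X, ∀ y ∈ X, N (x + y) ≤ N x + N y
  N_smul : ∀ (c : ℝ), ∀ x ∈ X, N (c • x) = |c| * N x
  complete : ∀ f : ℕ → ℕ → ℝ, (∀ k, f k ∈ X) →
    (∀ ε : ℝ, 0 < ε → ∃ K, ∀ m ≥ K, ∀ n ≥ K, N (f m - f n) < ε) →
    ∃ x ∈ X, ∀ ε : ℝ, 0 < ε → ∃ K, ∀ k ≥ K, N (f k - x) < ε
  mono_mem : ∀ (x : ℕ → ℝ), ∀ y ∈ X, (∀ n, |x n| ≤ |y n|) → x ∈ X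
  mono_norm : ∀ (x : ℕ → ℝ), ∀ y ∈ X, (∀ n, |x n| ≤ |y n|) → N x ≤ N y
  unit_mem : ∀ k : ℕ, (fun n => if n = k then (1 : ℝ) else 0) ∈ X
  unit_norm : ∀ k : ℕ, N (fun n => if n = k then (1 : ℝ) else 0) = 1

/-- A Banach sequence space is symmetric if it is stable under permutations of the
coordinates, with equal norm. -/
def IsSymmetric (S : BanachSeqSpace) : Prop :=
  ∀ x ∈ S.X, ∀ σ : Equiv.Perm ℕ, (x ∘ σ) ∈ S.X ∧ S.N (x ∘ σ) = S.N x

/-- The decreasing rearrangement of a (bounded) sequence, indexed from 0: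
`dstar x n` is the paper's `x*_(n+1) = inf { sup_{k ∉ J} |x k| : |J| ≤ n }`. -/
noncomputable def dstar (x : ℕ → ℝ) (n : ℕ) : ℝ :=
  sInf {a : ℝ | ∃ J : Finset ℕ, J.card ≤ n ∧ a = sSup {b : ℝ | ∃ k, k ∉ J ∧ b = |x k|}}

/-- The closing up of a sequence: its nonzero terms in order, padded with zeros. -/
noncomputable def closingUp (x : ℕ → ℝ) (n : ℕ) : ℝ :=
  if {k | x k ≠ 0}.Infinite ∨ n < {k | x k ≠ 0}.ncard
  then x (Nat.nth (fun k => x k ≠ 0) n) else 0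

section TailSup

variable (x y : ℕ → ℝ)

theorem nonempty_abs_tail (J : Finset ℕ) : {b : ℝ | ∃ k, k ∉ J ∧ b = |x k|}.Nonempty := by
  obtain ⟨k, hk⟩ := Infinite.exists_notMem_finset J
  exact ⟨|x k|, k, hk, rfl⟩

theorem bddAbove_abs_tail {C : ℝ} (hC : ∀ n, |x n| ≤ C) (J : Finset ℕ) :
    BddAbove {b : ℝ | ∃ k, k ∉ J ∧ b = |x k|} :=
  ⟨C, by rintro b ⟨k, _, rfl⟩; exact hC k⟩

theorem dstar_le_sSup_abs_tail {C : ℝ} (hC : ∀ n, |x n| ≤ C) {n : ℕ} {J : Finset ℕ}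
    (hJ : J.card ≤ n) : dstar x n ≤ sSup {b : ℝ | ∃ k, k ∉ J ∧ b = |x k|} := by
  refine csInf_le ⟨0, ?_⟩ ⟨J, hJ, rfl⟩
  rintro a ⟨J', -, rfl⟩
  obtain ⟨b, k, hk, rfl⟩ := nonempty_abs_tail x J'
  exact (abs_nonneg _).trans (le_csSup (bddAbove_abs_tail x hC J') ⟨k, hk, rfl⟩)

/-- Discarding the indices `J` from `y` discards at most the indices `π⁻¹ J` from `y ∘ π`. -/
theorem sSup_abs_tail_comp_le {C : ℝ} (hC : ∀ n, |y n| ≤ C) {π : ℕ → ℕ}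
    (hπ : Function.Injective π) (h : ∀ n, x n = y (π n)) (J : Finset ℕ) :
    sSup {b : ℝ | ∃ k, k ∉ J.preimage π hπ.injOn ∧ b = |x k|} ≤
      sSup {b : ℝ | ∃ k, k ∉ J ∧ b = |y k|} := by
  refine csSup_le_csSup (bddAbove_abs_tail y hC J) (nonempty_abs_tail x _) ?_
  rintro b ⟨k, hk, rfl⟩
  exact ⟨π k, fun hJ => hk (Finset.mem_preimage.mpr hJ), by rw [h k]⟩

end TailSup

theorem dstar_comp_injective_general (x y : ℕ → ℝ)
    (hy : ∃ C, ∀ n, |y n| ≤ C)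
    (π : ℕ → ℕ) (hπ : Function.Injective π) (h : ∀ n, x n = y (π n)) :
    ∀ n, dstar x n ≤ dstar y n := by
  obtain ⟨C, hC⟩ := hy
  have hCx : ∀ n, |x n| ≤ C := fun n => h n ▸ hC (π n)
  intro n
  refine le_csInf ⟨_, ∅, by simp, rfl⟩ ?_
  rintro a ⟨J, hJ, rfl⟩
  have hcard : (J.preimage π hπ.injOn).card ≤ n :=
    (Finset.card_le_card_of_injOn π (fun k hk => Finset.mem_preimage.mp hk) hπ.injOn).trans hJ
  exact (dstar_le_sSup_abs_tail x hCx hcard).trans (sSup_abs_tail_comp_le x y hC hπ h J)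

/-- If `x` is obtained from `y` by an injective map (`xₙ = y_{π n}`), then
`x*ₙ ≤ y*ₙ` for all `n`. -/
theorem dstar_comp_injective (x y : ℕ → ℝ)
    (hx : ∃ C, ∀ n, |x n| ≤ C) (hy : ∃ C, ∀ n, |y n| ≤ C)
    (π : ℕ → ℕ) (hπ : Function.Injective π) (h : ∀ n, x n = y (π n)) :
    ∀ n, dstar x n ≤ dstar y n :=
  dstar_comp_injective_general x y hy π hπ h
end

section
/- Let X be a symmetric Banach sequence space (with ‖eₖ‖ = 1) that is different from ℓ₁ as a set. If γ is a continuous symmetric linear functional on X, then γ(eₙ) = 0 for all n. Equivalently: if some (hence every) γ(eₙ) ≠ 0, then X = ℓ₁ with equivalent norms. -/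
open scoped Classical

/-! If `γ (e k) ≠ 0` then, by symmetry, `γ` takes the same value `c ≠ 0` on every unit vector, so
for `x ∈ X` and a finite set `F` the truncation `∑_{i ∈ F} |x i| e i` has `γ`-value `c ∑_{i ∈ F} |x i|`
and norm at most `‖x‖`; continuity bounds these partial sums, so `X ⊆ ℓ₁`. Conversely `ℓ₁ ⊆ X`,
because the partial sums of an absolutely summable sequence are Cauchy in `X` and their limit
must be the sequence itself. Hence `X = ℓ₁`. -/

noncomputable def unitVec (k : ℕ) : ℕ → ℝ := fun n => if n = k then 1 else 0

lemma unitVec_comp_swap (k m : ℕ) : unitVec k ∘ Equiv.swap k m = unitVec m := by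
  funext n
  simp only [Function.comp_apply, unitVec, Equiv.swap_apply_eq_iff, Equiv.swap_apply_left]

lemma sum_smul_unitVec_apply (g : ℕ → ℝ) (F : Finset ℕ) (n : ℕ) :
    (∑ k ∈ F, g k • unitVec k) n = if n ∈ F then g n else 0 := by
  simp only [Finset.sum_apply, Pi.smul_apply, unitVec, smul_eq_mul, mul_ite, mul_one, mul_zero]
  exact Finset.sum_ite_eq F n g

namespace BanachSeqSpace

variable (S : BanachSeqSpace)

lemma N_zero : S.N 0 = 0 := by
  simpa using S.N_smul 0 0 S.X.zero_mem

lemma N_sub_comm {x y : ℕ → ℝ} (hx : x ∈ S.X) (hy : y ∈ S.X) : S.N (x - y) = S.N (y - x) := by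
  rw [← neg_sub, ← neg_one_smul ℝ (y - x), S.N_smul _ _ (S.X.sub_mem hy hx), abs_neg, abs_one,
    one_mul]

lemma unitVec_mem (k : ℕ) : unitVec k ∈ S.X := S.unit_mem k

lemma N_smul_unitVec (c : ℝ) (k : ℕ) : S.N (c • unitVec k) = |c| := by
  rw [S.N_smul _ _ (S.unitVec_mem k), show S.N (unitVec k) = 1 from S.unit_norm k, mul_one]

lemma abs_apply_le_N {z : ℕ → ℝ} (hz : z ∈ S.X) (n : ℕ) : |z n| ≤ S.N z := by
  rw [← S.N_smul_unitVec (z n) n]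
  refine S.mono_norm _ z hz fun m => ?_
  by_cases hm : m = n
  · subst hm; simp [unitVec]
  · simp [unitVec, hm]

lemma sum_smul_unitVec_mem (g : ℕ → ℝ) (F : Finset ℕ) : (∑ k ∈ F, g k • unitVec k) ∈ S.X :=
  Submodule.sum_mem _ fun k _ => S.X.smul_mem _ (S.unitVec_mem k)

lemma N_sum_smul_unitVec_le (g : ℕ → ℝ) (F : Finset ℕ) :
    S.N (∑ k ∈ F, g k • unitVec k) ≤ ∑ k ∈ F, |g k| := by
  induction F using Finset.induction_on with
  | empty => simp [S.N_zero]
  | insert a s has ih =>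
    rw [Finset.sum_insert has, Finset.sum_insert has, ← S.N_smul_unitVec (g a) a]
    exact (S.N_add _ (S.X.smul_mem _ (S.unitVec_mem a)) _ (S.sum_smul_unitVec_mem g s)).trans
      (add_le_add_right ih _)

lemma N_sum_smul_unitVec_le_N {x : ℕ → ℝ} (hx : x ∈ S.X) (F : Finset ℕ) :
    S.N (∑ k ∈ F, |x k| • unitVec k) ≤ S.N x := by
  refine S.mono_norm _ x hx fun n => ?_
  rw [sum_smul_unitVec_apply]
  split_ifs <;> simp

lemma exists_limit_of_N_sub_le {f : ℕ → ℕ → ℝ} (hf : ∀ k, f k ∈ S.X) {s : ℕ → ℝ}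
    (hs : CauchySeq s) (hfs : ∀ m n, S.N (f m - f n) ≤ |s m - s n|) :
    ∃ y ∈ S.X, ∀ ε : ℝ, 0 < ε → ∃ K, ∀ k ≥ K, S.N (f k - y) < ε := by
  refine S.complete f hf fun ε hε => ?_
  obtain ⟨K, hK⟩ := Metric.cauchySeq_iff.1 hs ε hε
  exact ⟨K, fun m hm n hn => (hfs m n).trans_lt (Real.dist_eq _ _ ▸ hK m hm n hn)⟩

lemma eq_of_N_sub_tendsto_zero {f : ℕ → ℕ → ℝ} (hf : ∀ k, f k ∈ S.X) {x y : ℕ → ℝ}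
    (hy : y ∈ S.X) (hlim : ∀ ε : ℝ, 0 < ε → ∃ K, ∀ k ≥ K, S.N (f k - y) < ε)
    (hfx : ∀ n, ∃ K, ∀ k ≥ K, f k n = x n) : x = y := by
  funext n
  refine eq_of_forall_dist_le fun ε hε => ?_
  obtain ⟨K, hK⟩ := hlim ε hε
  obtain ⟨K', hK'⟩ := hfx n
  let k := max K K'
  calc dist (x n) (y n) = |(f k - y) n| := by
        rw [Real.dist_eq, Pi.sub_apply, hK' k (le_max_right _ _)]
    _ ≤ S.N (f k - y) := S.abs_apply_le_N (S.X.sub_mem (hf k) hy) n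
    _ ≤ ε := (hK k (le_max_left _ _)).le

lemma mem_of_summable_abs {x : ℕ → ℝ} (hx : Summable fun n => |x n|) : x ∈ S.X := by
  let f : ℕ → ℕ → ℝ := fun k => ∑ i ∈ Finset.range k, x i • unitVec i
  let s : ℕ → ℝ := fun k => ∑ i ∈ Finset.range k, |x i|
  have hf : ∀ k, f k ∈ S.X := fun k => S.sum_smul_unitVec_mem x _
  have hf_sub_le : ∀ a b, b ≤ a → S.N (f a - f b) ≤ |s a - s b| := by
    intro a b hba
    have hsub := Finset.range_subset_range.2 hba
    rw [← Finset.sum_sdiff_eq_sub hsub, ← Finset.sum_sdiff_eq_sub hsub]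
    exact (S.N_sum_smul_unitVec_le x _).trans (le_abs_self _)
  have hfs : ∀ m n, S.N (f m - f n) ≤ |s m - s n| := by
    intro m n
    rcases le_total n m with h | h
    · exact hf_sub_le m n h
    · rw [S.N_sub_comm (hf m) (hf n), abs_sub_comm]
      exact hf_sub_le n m h
  obtain ⟨y, hy, hlim⟩ :=
    S.exists_limit_of_N_sub_le hf hx.hasSum.tendsto_sum_nat.cauchySeq hfs
  have hfx : ∀ n, ∃ K, ∀ k ≥ K, f k n = x n := fun n =>
    ⟨n + 1, fun k hk => by
      rw [show f k n = _ from sum_smul_unitVec_apply x _ n, if_pos (Finset.mem_range.2 (by omega))]⟩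
  exact S.eq_of_N_sub_tendsto_zero hf hy hlim hfx ▸ hy

lemma map_sum_smul_unitVec {γ : (ℕ → ℝ) → ℝ}
    (hadd : ∀ x ∈ S.X, ∀ y ∈ S.X, γ (x + y) = γ x + γ y)
    (hsmul : ∀ (c : ℝ), ∀ x ∈ S.X, γ (c • x) = c * γ x) (g : ℕ → ℝ) (F : Finset ℕ) :
    γ (∑ i ∈ F, g i • unitVec i) = ∑ i ∈ F, g i * γ (unitVec i) := by
  induction F using Finset.induction_on with
  | empty => simpa using hsmul 0 0 S.X.zero_mem
  | insert a s has ih =>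
    rw [Finset.sum_insert has, Finset.sum_insert has,
      hadd _ (S.X.smul_mem _ (S.unitVec_mem a)) _ (S.sum_smul_unitVec_mem g s),
      hsmul _ _ (S.unitVec_mem a), ih]

lemma summable_abs_of_map_unitVec_ne_zero {γ : (ℕ → ℝ) → ℝ}
    (hadd : ∀ x ∈ S.X, ∀ y ∈ S.X, γ (x + y) = γ x + γ y)
    (hsmul : ∀ (c : ℝ), ∀ x ∈ S.X, γ (c • x) = c * γ x)
    {C : ℝ} (hC : ∀ x ∈ S.X, |γ x| ≤ C * S.N x)
    (hγsym : ∀ x ∈ S.X, ∀ σ : Equiv.Perm ℕ, γ (x ∘ σ) = γ x)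
    {k : ℕ} (hk : γ (unitVec k) ≠ 0) {x : ℕ → ℝ} (hx : x ∈ S.X) :
    Summable fun n => |x n| := by
  have hc : 0 < |γ (unitVec k)| := abs_pos.2 hk
  have hγ_unitVec : ∀ m, γ (unitVec m) = γ (unitVec k) := fun m => by
    rw [← unitVec_comp_swap k m, hγsym _ (S.unitVec_mem k)]
  have hC_nonneg : 0 ≤ C := by
    have := hC _ (S.unitVec_mem k)
    rw [show S.N (unitVec k) = 1 from S.unit_norm k, mul_one] at this
    exact (abs_nonneg _).trans this
  refine summable_of_sum_range_le (c := C * S.N x / |γ (unitVec k)|) (fun n => abs_nonneg _)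
    fun n => (le_div_iff₀ hc).2 ?_
  calc (∑ i ∈ Finset.range n, |x i|) * |γ (unitVec k)|
      = |γ (∑ i ∈ Finset.range n, |x i| • unitVec i)| := by
        simp only [S.map_sum_smul_unitVec hadd hsmul, hγ_unitVec, ← Finset.sum_mul, abs_mul,
          abs_of_nonneg (Finset.sum_nonneg fun i _ => abs_nonneg (x i))]
    _ ≤ C * S.N (∑ i ∈ Finset.range n, |x i| • unitVec i) :=
        hC _ (S.sum_smul_unitVec_mem _ _)
    _ ≤ C * S.N x := mul_le_mul_of_nonneg_left (S.N_sum_smul_unitVec_le_N hx _) hC_nonneg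

end BanachSeqSpace

theorem symmetric_functional_vanishes_on_units_general (S : BanachSeqSpace)
    (hne : (S.X : Set (ℕ → ℝ)) ≠ {x | Summable fun n => |x n|})
    (γ : (ℕ → ℝ) → ℝ)
    (hadd : ∀ x ∈ S.X, ∀ y ∈ S.X, γ (x + y) = γ x + γ y)
    (hsmul : ∀ (c : ℝ), ∀ x ∈ S.X, γ (c • x) = c * γ x)
    (hcont : ∃ C : ℝ, ∀ x ∈ S.X, |γ x| ≤ C * S.N x)
    (hγsym : ∀ x ∈ S.X, ∀ σ : Equiv.Perm ℕ, γ (x ∘ σ) = γ x) :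
    ∀ k : ℕ, γ (fun n => if n = k then (1 : ℝ) else 0) = 0 := by
  intro k
  by_contra hk
  obtain ⟨C, hC⟩ := hcont
  refine hne (Set.ext fun x => ⟨fun hx => ?_, S.mem_of_summable_abs⟩)
  exact S.summable_abs_of_map_unitVec_ne_zero hadd hsmul hC hγsym hk hx

/-- On a symmetric Banach sequence space different from `ℓ₁` as a set, every continuous
symmetric linear functional vanishes on the canonical unit vectors. -/
theorem symmetric_functional_vanishes_on_units (S : BanachSeqSpace)
    (hsym : IsSymmetric S)
    (hne : (S.X : Set (ℕ → ℝ)) ≠ {x | Summable fun n => |x n|})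
    (γ : (ℕ → ℝ) → ℝ)
    (hadd : ∀ x ∈ S.X, ∀ y ∈ S.X, γ (x + y) = γ x + γ y)
    (hsmul : ∀ (c : ℝ), ∀ x ∈ S.X, γ (c • x) = c * γ x)
    (hcont : ∃ C : ℝ, ∀ x ∈ S.X, |γ x| ≤ C * S.N x)
    (hγsym : ∀ x ∈ S.X, ∀ σ : Equiv.Perm ℕ, γ (x ∘ σ) = γ x) :
    ∀ k : ℕ, γ (fun n => if n = k then (1 : ℝ) else 0) = 0 :=
  symmetric_functional_vanishes_on_units_general S hne γ hadd hsmul hcont hγsym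
end

section
/- Let X be a real symmetric Banach sequence space contained in c₀ and let γ be a continuous symmetric linear functional on X that vanishes on all canonical unit vectors eₙ. Then γ(x) = γ(x') for every x ∈ X, where x' is the closing up of x. -/
open scoped Classical

open Filter

open Function Set

/-! The closing up `x'` differs from `x` only by moving the nonzero terms into the gaps left by the
zeros. When `x` has finite support this is a permutation of the coordinates. When the support is
infinite it need not be (if `x` has finitely many zeros, `x'` has none), but after splitting the
nonzero terms of `x` into those of even and of odd rank, each half has infinitely many zeros
on both sides, so each half of `x` is a permutation of the corresponding half of `x'`;
additivity of `γ` then concludes. -/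

theorem exists_perm_eqOn_mapsTo_compl {f : ℕ → ℕ} {q : Set ℕ} (hf : InjOn f q)
    (hq : qᶜ.Infinite) (hfq : (f '' q)ᶜ.Infinite) :
    ∃ σ : Equiv.Perm ℕ, EqOn σ f q ∧ MapsTo σ qᶜ (f '' q)ᶜ := by
  have := hq.to_subtype
  have := hfq.to_subtype
  have := Nat.Subtype.denumerable (qᶜ : Set ℕ)
  have := Nat.Subtype.denumerable ((f '' q)ᶜ : Set ℕ)
  let onCompl : (qᶜ : Set ℕ) ≃ ((f '' q)ᶜ : Set ℕ) :=
    (Denumerable.eqv _).trans (Denumerable.eqv _).symm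
  let σ : Equiv.Perm ℕ := (Equiv.Set.sumCompl q).symm.trans
    (((Equiv.Set.imageOfInjOn f q hf).sumCongr onCompl).trans (Equiv.Set.sumCompl (f '' q)))
  refine ⟨σ, fun n hn => ?_, fun n hn => ?_⟩
  · simp only [σ, Equiv.trans_apply, Equiv.Set.sumCompl_symm_apply_of_mem hn,
      Equiv.sumCongr_apply, Sum.map_inl, Equiv.Set.sumCompl_apply_inl]
    rfl
  · simp [σ, Equiv.Set.sumCompl_symm_apply_of_notMem hn]

theorem exists_perm_indicator_image_comp {M : Type*} [Zero M] {f : ℕ → ℕ} {q : Set ℕ}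
    (hf : InjOn f q) (hq : qᶜ.Infinite) (hfq : (f '' q)ᶜ.Infinite) (y : ℕ → M) :
    ∃ σ : Equiv.Perm ℕ, (f '' q).indicator y ∘ σ = q.indicator (y ∘ f) := by
  obtain ⟨σ, hσf, hσq⟩ := exists_perm_eqOn_mapsTo_compl hf hq hfq
  refine ⟨σ, funext fun n => ?_⟩
  by_cases hn : n ∈ q
  · simp [hσf hn, hn, mem_image_of_mem f hn]
  · simp [hn, indicator_of_notMem (hσq hn)]

namespace BanachSeqSpace

variable {S : BanachSeqSpace} {γ : (ℕ → ℝ) → ℝ} {x : ℕ → ℝ}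

theorem indicator_mem (hx : x ∈ S.X) (s : Set ℕ) : s.indicator x ∈ S.X :=
  S.mono_mem _ x hx fun n => by
    by_cases hn : n ∈ s <;> simp [hn]

theorem indicator_comp_mem_and_apply_eq (hsym : IsSymmetric S)
    (hγsym : ∀ x ∈ S.X, ∀ σ : Equiv.Perm ℕ, γ (x ∘ σ) = γ x) (hx : x ∈ S.X)
    {f : ℕ → ℕ} {q : Set ℕ} (hf : InjOn f q) (hq : qᶜ.Infinite)
    (hfq : (f '' q)ᶜ.Infinite) :
    q.indicator (x ∘ f) ∈ S.X ∧ γ (q.indicator (x ∘ f)) = γ ((f '' q).indicator x) := by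
  obtain ⟨σ, hσ⟩ := exists_perm_indicator_image_comp hf hq hfq x
  rw [← hσ]
  exact ⟨(hsym _ (indicator_mem hx _) σ).1, hγsym _ (indicator_mem hx _) σ⟩

theorem apply_eq_apply_comp_of_support_subset_range (hsym : IsSymmetric S)
    (hadd : ∀ x ∈ S.X, ∀ y ∈ S.X, γ (x + y) = γ x + γ y)
    (hγsym : ∀ x ∈ S.X, ∀ σ : Equiv.Perm ℕ, γ (x ∘ σ) = γ x) (hx : x ∈ S.X)
    {f : ℕ → ℕ} (hf : Injective f) (hsupp : support x ⊆ range f) :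
    γ x = γ (x ∘ f) := by
  set E : Set ℕ := {n | Even n}
  have hE : E.Infinite := infinite_of_forall_exists_gt fun a =>
    ⟨2 * a + 2, ⟨a + 1, by ring⟩, by omega⟩
  have hEc : Eᶜ.Infinite := infinite_of_forall_exists_gt fun a =>
    ⟨2 * a + 1, by simp [E], by omega⟩
  have hfE : (f '' E)ᶜ.Infinite := (hEc.image hf.injOn).mono (image_compl_subset hf)
  have hfEc : (f '' Eᶜ)ᶜ.Infinite := (hE.image hf.injOn).mono (by
    simpa using image_compl_subset (s := Eᶜ) hf)
  obtain ⟨hmemE, heqE⟩ := indicator_comp_mem_and_apply_eq hsym hγsym hx hf.injOn hEc hfE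
  obtain ⟨hmemEc, heqEc⟩ :=
    indicator_comp_mem_and_apply_eq (q := Eᶜ) hsym hγsym hx hf.injOn (by rwa [compl_compl]) hfEc
  have hx_split : x = (f '' E).indicator x + (f '' Eᶜ).indicator x := by
    calc x = (f '' (E ∪ Eᶜ)).indicator x := by
          rw [union_compl_self, image_univ, indicator_eq_self.2 hsupp]
      _ = _ := by
          rw [image_union, indicator_union_of_disjoint
            ((disjoint_image_iff hf).2 disjoint_compl_right)]
          rfl
  calc γ x = γ ((f '' E).indicator x) + γ ((f '' Eᶜ).indicator x) := by
        rw [← hadd _ (indicator_mem hx _) _ (indicator_mem hx _), ← hx_split]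
    _ = γ (E.indicator (x ∘ f) + Eᶜ.indicator (x ∘ f)) := by
        rw [hadd _ hmemE _ hmemEc, heqE, heqEc]
    _ = γ (x ∘ f) := by rw [indicator_self_add_compl]

end BanachSeqSpace

theorem symmetric_functional_closingUp_general (S : BanachSeqSpace)
    (hsym : IsSymmetric S)
    (γ : (ℕ → ℝ) → ℝ)
    (hadd : ∀ x ∈ S.X, ∀ y ∈ S.X, γ (x + y) = γ x + γ y)
    (hγsym : ∀ x ∈ S.X, ∀ σ : Equiv.Perm ℕ, γ (x ∘ σ) = γ x) :
    ∀ x ∈ S.X, γ x = γ (closingUp x) := by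
  intro x hx
  by_cases hinf : {k | x k ≠ 0}.Infinite
  · have hcl : closingUp x = x ∘ Nat.nth (x · ≠ 0) :=
      funext fun n => by simp [closingUp, hinf]
    rw [hcl]
    exact BanachSeqSpace.apply_eq_apply_comp_of_support_subset_range hsym hadd hγsym hx
      (Nat.nth_injective hinf) (Nat.range_nth_of_infinite hinf).ge
  · have hfin : {k | x k ≠ 0}.Finite := not_infinite.1 hinf
    have hcl : closingUp x = (Iio hfin.toFinset.card).indicator (x ∘ Nat.nth (x · ≠ 0)) :=
      funext fun n => by simp [closingUp, hinf, indicator_apply, ncard_eq_toFinset_card _ hfin]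
    have himage : Nat.nth (x · ≠ 0) '' Iio hfin.toFinset.card = support x :=
      Nat.image_nth_Iio_card hfin
    rw [hcl, (BanachSeqSpace.indicator_comp_mem_and_apply_eq hsym hγsym hx (Nat.nth_injOn hfin)
      (finite_Iio _).infinite_compl (himage ▸ hfin.infinite_compl)).2, himage, indicator_support]

/-- A continuous symmetric linear functional on a symmetric Banach sequence space
contained in `c₀` which vanishes on the unit vectors satisfies `γ x = γ x'`,
where `x'` is the closing up of `x`. -/
theorem symmetric_functional_closingUp (S : BanachSeqSpace)
    (hsym : IsSymmetric S)
    (hc0 : ∀ x ∈ S.X, Tendsto x atTop (nhds 0))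
    (γ : (ℕ → ℝ) → ℝ)
    (hadd : ∀ x ∈ S.X, ∀ y ∈ S.X, γ (x + y) = γ x + γ y)
    (hsmul : ∀ (c : ℝ), ∀ x ∈ S.X, γ (c • x) = c * γ x)
    (hcont : ∃ C : ℝ, ∀ x ∈ S.X, |γ x| ≤ C * S.N x)
    (hγsym : ∀ x ∈ S.X, ∀ σ : Equiv.Perm ℕ, γ (x ∘ σ) = γ x)
    (hunits : ∀ k : ℕ, γ (fun n => if n = k then (1 : ℝ) else 0) = 0) :
    ∀ x ∈ S.X, γ x = γ (closingUp x) :=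
  symmetric_functional_closingUp_general S hsym γ hadd hγsym
end

section
/- Let Ψ : ℕ → ℝ satisfy Ψ(1) = 1, Ψ strictly increasing to ∞, Ψ(n)/n → 0, and lim_{n→∞} Ψ(2n)/Ψ(n) = 1. Then the real Marcinkiewicz space m_Ψ = { x : sup_n (Σ_{k=1}^n x*_k)/Ψ(n) < ∞ } admits a nonzero continuous symmetric linear functional. -/
/-!
Write `S_N(x) = x*_1 + ⋯ + x*_N` (`topSum x N`), fix `n₀` with `Ψ(2n) ≤ 2Ψ(n)` for `n ≥ n₀`,
and put `N_k = 2^k n₀`. For `0 ≤ x ∈ m_Ψ` let `φ(x)` be a Banach limit (a shift-invariant limit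
of Cesàro means along a free ultrafilter) of the bounded sequence `S_{N_k}(x) / Ψ(N_k)`. The
functional `S_N` is subadditive, and `S_N(x) + S_N(y) ≤ S_{2N}(x + y)` for `x, y ≥ 0`; since
`Ψ(N_{k+1}) / Ψ(N_k) → 1`, shift invariance squeezes `φ(x + y)` between these two bounds, so `φ`
is additive on the positive cone. Then `γ(x) = φ(x⁺) - φ(x⁻)` is linear, bounded by the norm,
and symmetric because `S_N` is. It does not vanish on the sequence that spreads the increment
`Ψ(N_{j+1}) - Ψ(N_j)` evenly over the block `[N_j, N_{j+1})`: its partial sums up to `N_k` are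
exactly `Ψ(N_k)`, and the doubling bound keeps it in `m_Ψ`.
-/

open scoped Classical

open Filter

open Finset Topology

namespace Marcinkiewicz

noncomputable section

def Bounded (x : ℕ → ℝ) : Prop := ∃ C, ∀ n, |x n| ≤ C

lemma Bounded.of_abs_le {x y : ℕ → ℝ} (hy : Bounded y) (h : ∀ n, |x n| ≤ |y n|) :
    Bounded x :=
  let ⟨C, hC⟩ := hy
  ⟨C, fun n => (h n).trans (hC n)⟩

lemma Bounded.add {x y : ℕ → ℝ} (hx : Bounded x) (hy : Bounded y) : Bounded (x + y) :=
  let ⟨C, hC⟩ := hx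
  let ⟨D, hD⟩ := hy
  ⟨C + D, fun n => (abs_add_le _ _).trans (add_le_add (hC n) (hD n))⟩

lemma Bounded.mul {x y : ℕ → ℝ} (hx : Bounded x) (hy : Bounded y) : Bounded (x * y) :=
  let ⟨C, hC⟩ := hx
  let ⟨D, hD⟩ := hy
  ⟨C * D, fun n => by
    rw [Pi.mul_apply, abs_mul]
    exact mul_le_mul (hC n) (hD n) (abs_nonneg _) ((abs_nonneg _).trans (hC n))⟩

lemma Bounded.smul {x : ℕ → ℝ} (hx : Bounded x) (c : ℝ) : Bounded (c • x) :=
  let ⟨C, hC⟩ := hx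
  ⟨|c| * C, fun n => by
    rw [Pi.smul_apply, smul_eq_mul, abs_mul]
    exact mul_le_mul_of_nonneg_left (hC n) (abs_nonneg c)⟩

lemma Bounded.comp {x : ℕ → ℝ} (hx : Bounded x) (f : ℕ → ℕ) : Bounded (x ∘ f) :=
  let ⟨C, hC⟩ := hx
  ⟨C, fun n => hC (f n)⟩

lemma bounded_of_tendsto {x : ℕ → ℝ} {l : ℝ} (h : Tendsto x atTop (𝓝 l)) : Bounded x := by
  obtain ⟨C, hC⟩ := isBounded_iff_forall_norm_le.1 (Metric.isBounded_range_of_tendsto x h)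
  exact ⟨C, fun n => hC _ ⟨n, rfl⟩⟩

section Rearrangement

variable {x y : ℕ → ℝ} {n : ℕ}

def supOff (x : ℕ → ℝ) (J : Finset ℕ) : ℝ := sSup {b : ℝ | ∃ k, k ∉ J ∧ b = |x k|}

lemma abs_le_supOff (hx : Bounded x) {J : Finset ℕ} {k : ℕ} (hk : k ∉ J) :
    |x k| ≤ supOff x J := by
  obtain ⟨C, hC⟩ := hx
  exact le_csSup ⟨C, by rintro _ ⟨k, -, rfl⟩; exact hC k⟩ ⟨k, hk, rfl⟩

lemma supOff_nonneg (hx : Bounded x) (J : Finset ℕ) : 0 ≤ supOff x J := by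
  obtain ⟨k, hk⟩ := J.exists_notMem
  exact (abs_nonneg _).trans (abs_le_supOff hx hk)

lemma exists_lt_abs_of_lt_supOff {J : Finset ℕ} {t : ℝ} (h : t < supOff x J) :
    ∃ k ∉ J, t < |x k| := by
  obtain ⟨k, hk⟩ := J.exists_notMem
  obtain ⟨_, ⟨k, hk, rfl⟩, hlt⟩ :=
    exists_lt_of_lt_csSup (s := {b : ℝ | ∃ k, k ∉ J ∧ b = |x k|}) ⟨_, k, hk, rfl⟩ h
  exact ⟨k, hk, hlt⟩

lemma dstar_le_supOff (hx : Bounded x) {J : Finset ℕ} (hJ : #J ≤ n) :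
    dstar x n ≤ supOff x J :=
  csInf_le ⟨0, by rintro _ ⟨J, -, rfl⟩; exact supOff_nonneg hx J⟩ ⟨J, hJ, rfl⟩

lemma le_dstar {t : ℝ} (h : ∀ J : Finset ℕ, #J ≤ n → t ≤ supOff x J) : t ≤ dstar x n :=
  le_csInf ⟨supOff x ∅, ∅, by simp, rfl⟩ (by rintro _ ⟨J, hJ, rfl⟩; exact h J hJ)

lemma dstar_nonneg (hx : Bounded x) (n : ℕ) : 0 ≤ dstar x n :=
  le_dstar fun J _ => supOff_nonneg hx J

/-- `topSum x n = x*_1 + ⋯ + x*_n`, the sum of the `n` largest moduli of `x`. -/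
def topSum (x : ℕ → ℝ) (n : ℕ) : ℝ := ∑ k ∈ range n, dstar x k

lemma topSum_succ (x : ℕ → ℝ) (n : ℕ) : topSum x (n + 1) = topSum x n + dstar x n :=
  sum_range_succ _ _

lemma topSum_nonneg (hx : Bounded x) (n : ℕ) : 0 ≤ topSum x n :=
  sum_nonneg fun k _ => dstar_nonneg hx k

lemma topSum_mono (hx : Bounded x) {m : ℕ} (h : m ≤ n) : topSum x m ≤ topSum x n :=
  sum_le_sum_of_subset_of_nonneg (range_subset_range.2 h) fun k _ _ => dstar_nonneg hx k

lemma sum_abs_le_topSum (hx : Bounded x) {A : Finset ℕ} (hA : #A ≤ n) :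
    ∑ m ∈ A, |x m| ≤ topSum x n := by
  induction n generalizing A with
  | zero => simp [card_eq_zero.1 (Nat.le_zero.1 hA), topSum]
  | succ n ih =>
    rw [topSum_succ]
    rcases hA.lt_or_eq with hlt | hcard
    · linarith [ih (Nat.lt_succ_iff.1 hlt), dstar_nonneg hx n]
    obtain ⟨a, ha, hmin⟩ := A.exists_min_image (fun m => |x m|) (card_pos.1 (by omega))
    -- `A` has `n + 1` elements, so it meets the complement of every `J` with `#J ≤ n`.
    have hxa : |x a| ≤ dstar x n := le_dstar fun J hJ => by
      obtain ⟨m, hmA, hmJ⟩ := not_subset.1 fun hAJ => by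
        have : #A ≤ #J := card_le_card hAJ
        omega
      exact (hmin m hmA).trans (abs_le_supOff hx hmJ)
    rw [← add_sum_erase A _ ha]
    linarith [ih (A := A.erase a) (by rw [card_erase_of_mem ha]; omega)]

lemma exists_card_eq_topSum_lt (hx : Bounded x) (n : ℕ) {ε : ℝ} (hε : 0 < ε) :
    ∃ A : Finset ℕ, #A = n ∧ topSum x n < ∑ m ∈ A, |x m| + ε := by
  induction n generalizing ε with
  | zero => exact ⟨∅, rfl, by simpa [topSum] using hε⟩
  | succ n ih =>
    obtain ⟨A, hA, hlt⟩ := ih (half_pos hε)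
    obtain ⟨k, hk, hkt⟩ :=
      exists_lt_abs_of_lt_supOff (show supOff x A - ε / 2 < supOff x A by linarith)
    refine ⟨insert k A, by rw [card_insert_of_notMem hk, hA], ?_⟩
    rw [topSum_succ, sum_insert hk]
    linarith [dstar_le_supOff hx hA.le]

lemma topSum_le_of_forall (hx : Bounded x) {B : ℝ}
    (h : ∀ A : Finset ℕ, #A ≤ n → ∑ m ∈ A, |x m| ≤ B) : topSum x n ≤ B :=
  le_of_forall_pos_lt_add fun ε hε =>
    let ⟨A, hA, hlt⟩ := exists_card_eq_topSum_lt hx n hε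
    hlt.trans_le (add_le_add_left (h A hA.le) ε)

lemma topSum_le_of_abs_le (hy : Bounded y) (h : ∀ m, |x m| ≤ |y m|) :
    topSum x n ≤ topSum y n :=
  topSum_le_of_forall (hy.of_abs_le h) fun _ hA =>
    (sum_le_sum fun m _ => h m).trans (sum_abs_le_topSum hy hA)

lemma topSum_add_le (hx : Bounded x) (hy : Bounded y) :
    topSum (x + y) n ≤ topSum x n + topSum y n :=
  topSum_le_of_forall (hx.add hy) fun A hA => calc
    ∑ m ∈ A, |(x + y) m| ≤ ∑ m ∈ A, |x m| + ∑ m ∈ A, |y m| := by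
      rw [← sum_add_distrib]; exact sum_le_sum fun m _ => abs_add_le _ _
    _ ≤ topSum x n + topSum y n := add_le_add (sum_abs_le_topSum hx hA) (sum_abs_le_topSum hy hA)

lemma topSum_add_topSum_le (hx : Bounded x) (hy : Bounded y) (hx0 : 0 ≤ x) (hy0 : 0 ≤ y) :
    topSum x n + topSum y n ≤ topSum (x + y) (2 * n) := by
  have hAB : ∀ A B : Finset ℕ, #A ≤ n → #B ≤ n →
      ∑ m ∈ A, |x m| + ∑ m ∈ B, |y m| ≤ topSum (x + y) (2 * n) := fun A B hA hB => calc
    ∑ m ∈ A, |x m| + ∑ m ∈ B, |y m| ≤ ∑ m ∈ A ∪ B, x m + ∑ m ∈ A ∪ B, y m := by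
      simp only [abs_of_nonneg (hx0 _), abs_of_nonneg (hy0 _)]
      exact add_le_add
        (sum_le_sum_of_subset_of_nonneg subset_union_left fun m _ _ => hx0 m)
        (sum_le_sum_of_subset_of_nonneg subset_union_right fun m _ _ => hy0 m)
    _ = ∑ m ∈ A ∪ B, |(x + y) m| := by
      rw [← sum_add_distrib]
      exact sum_congr rfl fun m _ => (abs_of_nonneg (add_nonneg (hx0 m) (hy0 m))).symm
    _ ≤ topSum (x + y) (2 * n) :=
      sum_abs_le_topSum (hx.add hy) ((card_union_le A B).trans (by omega))
  have hx' : topSum x n ≤ topSum (x + y) (2 * n) - topSum y n :=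
    topSum_le_of_forall hx fun A hA => le_sub_comm.1 <|
      topSum_le_of_forall hy fun B hB => le_sub_iff_add_le'.2 (hAB A B hA hB)
  linarith

lemma topSum_smul_le (hx : Bounded x) (c : ℝ) : topSum (c • x) n ≤ |c| * topSum x n :=
  topSum_le_of_forall (hx.smul c) fun A hA => by
    simp only [Pi.smul_apply, smul_eq_mul, abs_mul, ← mul_sum]
    exact mul_le_mul_of_nonneg_left (sum_abs_le_topSum hx hA) (abs_nonneg c)

lemma topSum_smul (hx : Bounded x) (c : ℝ) : topSum (c • x) n = |c| * topSum x n := by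
  refine (topSum_smul_le hx c).antisymm ?_
  rcases eq_or_ne c 0 with rfl | hc
  · simpa using topSum_nonneg ((hx.smul 0)) n
  calc |c| * topSum x n = |c| * topSum (c⁻¹ • c • x) n := by rw [inv_smul_smul₀ hc]
    _ ≤ |c| * (|c⁻¹| * topSum (c • x) n) :=
      mul_le_mul_of_nonneg_left (topSum_smul_le (hx.smul c) c⁻¹) (abs_nonneg c)
    _ = topSum (c • x) n := by
      rw [abs_inv, ← mul_assoc, mul_inv_cancel₀ (abs_ne_zero.2 hc), one_mul]

lemma topSum_comp_le (hx : Bounded x) {f : ℕ → ℕ} (hf : Function.Injective f) :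
    topSum (x ∘ f) n ≤ topSum x n :=
  topSum_le_of_forall (hx.comp f) fun A hA => by
    rw [show ∑ m ∈ A, |(x ∘ f) m| = ∑ m ∈ A.image f, |x m| from
      (sum_image (f := fun m => |x m|) fun a _ b _ h => hf h).symm]
    exact sum_abs_le_topSum hx (card_image_le.trans hA)

lemma topSum_comp_perm (hx : Bounded x) (σ : Equiv.Perm ℕ) : topSum (x ∘ σ) n = topSum x n := by
  refine (topSum_comp_le hx σ.injective).antisymm ?_
  simpa [Function.comp_assoc] using topSum_comp_le (hx.comp σ) σ.symm.injective

end Rearrangement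

section BanachLimit

variable {b b' r : ℕ → ℝ}

lemma Bounded.tendsto_mul_zero (hb : Bounded b) (hr : Tendsto r atTop (𝓝 0)) :
    Tendsto (b * r) atTop (𝓝 0) := by
  obtain ⟨C, hC⟩ := hb
  refine squeeze_zero_norm (fun k => ?_) (by simpa using hr.abs.const_mul C)
  rw [Real.norm_eq_abs, Pi.mul_apply, abs_mul]
  exact mul_le_mul_of_nonneg_right (hC k) (abs_nonneg _)

def cesaro (b : ℕ → ℝ) (n : ℕ) : ℝ := (n : ℝ)⁻¹ * ∑ i ∈ range n, b i

lemma abs_cesaro_le {C : ℝ} (hC : ∀ n, |b n| ≤ C) (n : ℕ) : |cesaro b n| ≤ C := by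
  rcases n.eq_zero_or_pos with rfl | hn
  · simpa [cesaro] using (abs_nonneg _).trans (hC 0)
  rw [cesaro, abs_mul, abs_inv, Nat.abs_cast, inv_mul_le_iff₀ (by positivity)]
  calc |∑ i ∈ range n, b i| ≤ ∑ i ∈ range n, |b i| := abs_sum_le_sum_abs _ _
    _ ≤ n * C := (sum_le_sum fun i (_ : i ∈ range n) => hC i).trans_eq (by simp)

def banachLim (b : ℕ → ℝ) : ℝ := limUnder (hyperfilter ℕ : Filter ℕ) (cesaro b)

lemma tendsto_banachLim (hb : Bounded b) :
    Tendsto (cesaro b) (hyperfilter ℕ) (𝓝 (banachLim b)) := by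
  obtain ⟨C, hC⟩ := hb
  obtain ⟨l, -, hl⟩ := isCompact_Icc.ultrafilter_le_nhds'
    (Ultrafilter.map (cesaro b) (hyperfilter ℕ))
    (Ultrafilter.mem_map.2 (univ_mem' fun n => abs_le.1 (abs_cesaro_le hC n)))
  have hl : Tendsto (cesaro b) (hyperfilter ℕ) (𝓝 l) := hl
  rwa [banachLim, hl.limUnder_eq]

lemma banachLim_eq_of_tendsto {l : ℝ} (h : Tendsto b atTop (𝓝 l)) : banachLim b = l :=
  (h.cesaro.mono_left Nat.hyperfilter_le_atTop).limUnder_eq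

lemma banachLim_add (hb : Bounded b) (hb' : Bounded b') :
    banachLim (b + b') = banachLim b + banachLim b' := by
  refine Tendsto.limUnder_eq ?_
  convert (tendsto_banachLim hb).add (tendsto_banachLim hb') using 1
  ext n
  simp [cesaro, sum_add_distrib, mul_add]

lemma banachLim_smul (hb : Bounded b) (c : ℝ) : banachLim (c • b) = c * banachLim b := by
  refine Tendsto.limUnder_eq ?_
  convert (tendsto_banachLim hb).const_mul c using 1
  ext n
  simp [cesaro, ← mul_sum, mul_left_comm]

lemma banachLim_mono (hb : Bounded b) (hb' : Bounded b') (h : b ≤ b') :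
    banachLim b ≤ banachLim b' :=
  le_of_tendsto_of_tendsto' (tendsto_banachLim hb) (tendsto_banachLim hb') fun n =>
    mul_le_mul_of_nonneg_left (sum_le_sum fun i _ => h i) (by positivity)

lemma le_banachLim (hb : Bounded b) {c : ℝ} (h : ∀ n, c ≤ b n) : c ≤ banachLim b := by
  simpa [banachLim_eq_of_tendsto tendsto_const_nhds] using
    banachLim_mono (b := fun _ => c) ⟨|c|, fun _ => le_rfl⟩ hb h

lemma banachLim_le (hb : Bounded b) {c : ℝ} (h : ∀ n, b n ≤ c) : banachLim b ≤ c := by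
  simpa [banachLim_eq_of_tendsto tendsto_const_nhds] using
    banachLim_mono (b' := fun _ => c) hb ⟨|c|, fun _ => le_rfl⟩ h

lemma banachLim_mul_of_tendsto_one (hb : Bounded b) (hr : Tendsto r atTop (𝓝 1)) :
    banachLim (b * r) = banachLim b := by
  have hnull : Tendsto (b * (r - 1)) atTop (𝓝 0) :=
    hb.tendsto_mul_zero (by simpa using hr.sub_const 1 : Tendsto (fun n => r n - 1) atTop (𝓝 0))
  rw [show b * r = b + b * (r - 1) by ring, banachLim_add hb (bounded_of_tendsto hnull),
    banachLim_eq_of_tendsto hnull, add_zero]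

lemma banachLim_shift (hb : Bounded b) : banachLim (fun n => b (n + 1)) = banachLim b := by
  have hdiff : cesaro (fun n => b (n + 1)) =
      cesaro b + (fun n => b n - b 0) * fun n : ℕ => (n : ℝ)⁻¹ := by
    ext n
    simp only [cesaro, Pi.add_apply, Pi.mul_apply, ← sum_range_sub, sum_sub_distrib]
    ring
  have hnull : Tendsto ((fun n => b n - b 0) * fun n : ℕ => (n : ℝ)⁻¹) atTop (𝓝 0) :=
    (hb.add (bounded_of_tendsto (tendsto_const_nhds (x := -b 0)))).tendsto_mul_zero
      tendsto_inv_atTop_nhds_zero_nat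
  refine Tendsto.limUnder_eq ?_
  rw [hdiff]
  exact add_zero (banachLim b) ▸
    (tendsto_banachLim hb).add (hnull.mono_left Nat.hyperfilter_le_atTop)

end BanachLimit

variable {Ψ : ℕ → ℝ} {n₀ : ℕ} {x y : ℕ → ℝ}

lemma abs_posPart_apply_le (x : ℕ → ℝ) (m : ℕ) : |x⁺ m| ≤ |x m| := by
  rw [Pi.posPart_apply, abs_of_nonneg (posPart_nonneg _)]
  exact sup_le (le_abs_self _) (abs_nonneg _)

lemma abs_negPart_apply_le (x : ℕ → ℝ) (m : ℕ) : |x⁻ m| ≤ |x m| := by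
  simpa [← posPart_neg] using abs_posPart_apply_le (-x) m

lemma topSum_zero (n : ℕ) : topSum 0 n = 0 :=
  (topSum_le_of_forall ⟨0, by simp⟩ fun _ _ => by simp).antisymm (topSum_nonneg ⟨0, by simp⟩ n)

def MemMarcinkiewicz (Ψ : ℕ → ℝ) (x : ℕ → ℝ) : Prop :=
  Bounded x ∧ ∃ C, ∀ n, topSum x (n + 1) / Ψ (n + 1) ≤ C

lemma MemMarcinkiewicz.of_abs_le (hΨ : ∀ n, 0 < n → 0 < Ψ n) (hy : MemMarcinkiewicz Ψ y)
    (h : ∀ m, |x m| ≤ |y m|) : MemMarcinkiewicz Ψ x :=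
  let ⟨hyb, C, hC⟩ := hy
  ⟨hyb.of_abs_le h, C, fun n => (div_le_div_of_nonneg_right (topSum_le_of_abs_le hyb h)
    (hΨ _ n.succ_pos).le).trans (hC n)⟩

lemma MemMarcinkiewicz.add (hΨ : ∀ n, 0 < n → 0 < Ψ n) (hx : MemMarcinkiewicz Ψ x)
    (hy : MemMarcinkiewicz Ψ y) : MemMarcinkiewicz Ψ (x + y) :=
  let ⟨hxb, C, hC⟩ := hx
  let ⟨hyb, D, hD⟩ := hy
  ⟨hxb.add hyb, C + D, fun n => by
    refine le_trans ?_ (add_le_add (hC n) (hD n))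
    rw [← add_div]
    exact div_le_div_of_nonneg_right (topSum_add_le hxb hyb) (hΨ _ n.succ_pos).le⟩

def dyadicRatio (Ψ : ℕ → ℝ) (n₀ : ℕ) (x : ℕ → ℝ) (k : ℕ) : ℝ :=
  topSum x (2 ^ k * n₀) / Ψ (2 ^ k * n₀)

lemma dyadicRatio_nonneg (hΨ : ∀ n, 0 < n → 0 < Ψ n) (hn₀ : 0 < n₀) (hx : Bounded x) (k : ℕ) :
    0 ≤ dyadicRatio Ψ n₀ x k :=
  div_nonneg (topSum_nonneg hx _) (hΨ _ (by positivity)).le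

lemma dyadicRatio_le (hn₀ : 0 < n₀) {C : ℝ} (hC : ∀ n, topSum x (n + 1) / Ψ (n + 1) ≤ C)
    (k : ℕ) : dyadicRatio Ψ n₀ x k ≤ C := by
  obtain ⟨m, hm⟩ := Nat.exists_eq_add_one.2 (show 0 < 2 ^ k * n₀ by positivity)
  simpa only [dyadicRatio, hm] using hC m

lemma MemMarcinkiewicz.bounded_dyadicRatio (hΨ : ∀ n, 0 < n → 0 < Ψ n) (hn₀ : 0 < n₀)
    (hx : MemMarcinkiewicz Ψ x) : Bounded (dyadicRatio Ψ n₀ x) :=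
  let ⟨hxb, C, hC⟩ := hx
  ⟨C, fun k => by
    rw [abs_of_nonneg (dyadicRatio_nonneg hΨ hn₀ hxb k)]
    exact dyadicRatio_le hn₀ hC k⟩

lemma dyadicRatio_add_le (hΨ : ∀ n, 0 < n → 0 < Ψ n) (hn₀ : 0 < n₀) (hx : Bounded x)
    (hy : Bounded y) : dyadicRatio Ψ n₀ (x + y) ≤ dyadicRatio Ψ n₀ x + dyadicRatio Ψ n₀ y :=
  fun k => by
    rw [Pi.add_apply, dyadicRatio, dyadicRatio, dyadicRatio, ← add_div]
    exact div_le_div_of_nonneg_right (topSum_add_le hx hy) (hΨ _ (by positivity)).le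

lemma add_dyadicRatio_le_succ (hΨ : ∀ n, 0 < n → 0 < Ψ n) (hn₀ : 0 < n₀) (hx : Bounded x)
    (hy : Bounded y) (hx0 : 0 ≤ x) (hy0 : 0 ≤ y) :
    dyadicRatio Ψ n₀ x + dyadicRatio Ψ n₀ y ≤
      (fun k => dyadicRatio Ψ n₀ (x + y) (k + 1)) *
        fun k => Ψ (2 ^ (k + 1) * n₀) / Ψ (2 ^ k * n₀) :=
  fun k => by
    have htwo : 2 ^ (k + 1) * n₀ = 2 * (2 ^ k * n₀) := by ring
    simp only [Pi.add_apply, Pi.mul_apply, dyadicRatio]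
    rw [div_mul_div_cancel₀ (hΨ _ (by positivity)).ne', ← add_div, htwo]
    exact div_le_div_of_nonneg_right (topSum_add_topSum_le hx hy hx0 hy0)
      (hΨ _ (by positivity)).le

lemma tendsto_dyadic_doubling (hn₀ : 0 < n₀)
    (hdouble : Tendsto (fun n : ℕ => Ψ (2 * n) / Ψ n) atTop (𝓝 1)) :
    Tendsto (fun k => Ψ (2 ^ (k + 1) * n₀) / Ψ (2 ^ k * n₀)) atTop (𝓝 1) := by
  have hscale : Tendsto (fun k : ℕ => 2 ^ k * n₀) atTop atTop :=
    tendsto_atTop_mono (fun k => (Nat.lt_two_pow_self).le.trans (Nat.le_mul_of_pos_right _ hn₀))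
      tendsto_id
  refine (hdouble.comp hscale).congr fun k => ?_
  simp only [Function.comp_apply, pow_succ]
  ring_nf

def dyadicBanachLim (Ψ : ℕ → ℝ) (n₀ : ℕ) (x : ℕ → ℝ) : ℝ := banachLim (dyadicRatio Ψ n₀ x)

lemma dyadicBanachLim_add (hΨ : ∀ n, 0 < n → 0 < Ψ n) (hn₀ : 0 < n₀)
    (hdouble : Tendsto (fun n : ℕ => Ψ (2 * n) / Ψ n) atTop (𝓝 1))
    (hx : MemMarcinkiewicz Ψ x) (hy : MemMarcinkiewicz Ψ y) (hx0 : 0 ≤ x) (hy0 : 0 ≤ y) :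
    dyadicBanachLim Ψ n₀ (x + y) = dyadicBanachLim Ψ n₀ x + dyadicBanachLim Ψ n₀ y := by
  have hbx := hx.bounded_dyadicRatio hΨ hn₀
  have hby := hy.bounded_dyadicRatio hΨ hn₀
  have hbxy := (hx.add hΨ hy).bounded_dyadicRatio hΨ hn₀
  have hr := tendsto_dyadic_doubling hn₀ hdouble
  unfold dyadicBanachLim
  rw [← banachLim_add hbx hby]
  refine (banachLim_mono hbxy (hbx.add hby) (dyadicRatio_add_le hΨ hn₀ hx.1 hy.1)).antisymm ?_
  calc banachLim (dyadicRatio Ψ n₀ x + dyadicRatio Ψ n₀ y)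
      ≤ banachLim ((fun k => dyadicRatio Ψ n₀ (x + y) (k + 1)) *
          fun k => Ψ (2 ^ (k + 1) * n₀) / Ψ (2 ^ k * n₀)) :=
        banachLim_mono (hbx.add hby) ((hbxy.comp (· + 1)).mul (bounded_of_tendsto hr))
          (add_dyadicRatio_le_succ hΨ hn₀ hx.1 hy.1 hx0 hy0)
    _ = banachLim (fun k => dyadicRatio Ψ n₀ (x + y) (k + 1)) :=
        banachLim_mul_of_tendsto_one (hbxy.comp (· + 1)) hr
    _ = banachLim (dyadicRatio Ψ n₀ (x + y)) := banachLim_shift hbxy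

lemma dyadicBanachLim_smul (hΨ : ∀ n, 0 < n → 0 < Ψ n) (hn₀ : 0 < n₀)
    (hx : MemMarcinkiewicz Ψ x) {c : ℝ} (hc : 0 ≤ c) :
    dyadicBanachLim Ψ n₀ (c • x) = c * dyadicBanachLim Ψ n₀ x := by
  have h : dyadicRatio Ψ n₀ (c • x) = c • dyadicRatio Ψ n₀ x := by
    ext k
    simp only [dyadicRatio, topSum_smul hx.1, abs_of_nonneg hc, Pi.smul_apply, smul_eq_mul,
      mul_div_assoc]
  rw [dyadicBanachLim, h, banachLim_smul (hx.bounded_dyadicRatio hΨ hn₀)]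
  rfl

lemma dyadicBanachLim_comp_perm (hx : Bounded x) (σ : Equiv.Perm ℕ) :
    dyadicBanachLim Ψ n₀ (x ∘ σ) = dyadicBanachLim Ψ n₀ x := by
  unfold dyadicBanachLim dyadicRatio
  simp only [topSum_comp_perm hx]

lemma dyadicBanachLim_mem_Icc (hΨ : ∀ n, 0 < n → 0 < Ψ n) (hn₀ : 0 < n₀)
    (hx : MemMarcinkiewicz Ψ x) {C : ℝ} (hC : ∀ n, topSum x (n + 1) / Ψ (n + 1) ≤ C) :
    dyadicBanachLim Ψ n₀ x ∈ Set.Icc 0 C :=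
  ⟨le_banachLim (hx.bounded_dyadicRatio hΨ hn₀) (dyadicRatio_nonneg hΨ hn₀ hx.1),
    banachLim_le (hx.bounded_dyadicRatio hΨ hn₀) (dyadicRatio_le hn₀ hC)⟩

lemma dyadicBanachLim_zero : dyadicBanachLim Ψ n₀ 0 = 0 := by
  unfold dyadicBanachLim dyadicRatio
  simpa [topSum_zero] using banachLim_eq_of_tendsto (tendsto_const_nhds (x := (0 : ℝ)))

lemma posPart_smul_of_nonneg {c : ℝ} (hc : 0 ≤ c) (x : ℕ → ℝ) : (c • x)⁺ = c • x⁺ := by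
  ext m
  change max (c * x m) 0 = c * max (x m) 0
  rw [mul_max_of_nonneg _ _ hc, mul_zero]

lemma negPart_smul_of_nonneg {c : ℝ} (hc : 0 ≤ c) (x : ℕ → ℝ) : (c • x)⁻ = c • x⁻ := by
  rw [← posPart_neg, ← smul_neg, posPart_smul_of_nonneg hc, posPart_neg]

lemma MemMarcinkiewicz.posPart (hΨ : ∀ n, 0 < n → 0 < Ψ n) (hx : MemMarcinkiewicz Ψ x) :
    MemMarcinkiewicz Ψ x⁺ :=
  hx.of_abs_le hΨ (abs_posPart_apply_le x)

lemma MemMarcinkiewicz.negPart (hΨ : ∀ n, 0 < n → 0 < Ψ n) (hx : MemMarcinkiewicz Ψ x) :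
    MemMarcinkiewicz Ψ x⁻ :=
  hx.of_abs_le hΨ (abs_negPart_apply_le x)

lemma MemMarcinkiewicz.neg (hΨ : ∀ n, 0 < n → 0 < Ψ n) (hx : MemMarcinkiewicz Ψ x) :
    MemMarcinkiewicz Ψ (-x) :=
  hx.of_abs_le hΨ fun m => (abs_neg (x m)).le

def marcinkiewiczFunctional (Ψ : ℕ → ℝ) (n₀ : ℕ) (x : ℕ → ℝ) : ℝ :=
  dyadicBanachLim Ψ n₀ x⁺ - dyadicBanachLim Ψ n₀ x⁻

lemma marcinkiewiczFunctional_of_nonneg (hx0 : 0 ≤ x) :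
    marcinkiewiczFunctional Ψ n₀ x = dyadicBanachLim Ψ n₀ x := by
  rw [marcinkiewiczFunctional, posPart_eq_self.2 hx0, negPart_eq_zero.2 hx0, dyadicBanachLim_zero,
    sub_zero]

lemma marcinkiewiczFunctional_neg (x : ℕ → ℝ) :
    marcinkiewiczFunctional Ψ n₀ (-x) = -marcinkiewiczFunctional Ψ n₀ x := by
  rw [marcinkiewiczFunctional, marcinkiewiczFunctional, posPart_neg, negPart_neg, neg_sub]

lemma marcinkiewiczFunctional_add (hΨ : ∀ n, 0 < n → 0 < Ψ n) (hn₀ : 0 < n₀)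
    (hdouble : Tendsto (fun n : ℕ => Ψ (2 * n) / Ψ n) atTop (𝓝 1))
    (hx : MemMarcinkiewicz Ψ x) (hy : MemMarcinkiewicz Ψ y) :
    marcinkiewiczFunctional Ψ n₀ (x + y) =
      marcinkiewiczFunctional Ψ n₀ x + marcinkiewiczFunctional Ψ n₀ y := by
  have hadd3 : ∀ u v w : ℕ → ℝ, MemMarcinkiewicz Ψ u → MemMarcinkiewicz Ψ v →
      MemMarcinkiewicz Ψ w → 0 ≤ u → 0 ≤ v → 0 ≤ w →
      dyadicBanachLim Ψ n₀ (u + v + w) =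
        dyadicBanachLim Ψ n₀ u + dyadicBanachLim Ψ n₀ v + dyadicBanachLim Ψ n₀ w :=
    fun u v w hu hv hw hu0 hv0 hw0 => by
      rw [dyadicBanachLim_add hΨ hn₀ hdouble (hu.add hΨ hv) hw (add_nonneg hu0 hv0) hw0,
        dyadicBanachLim_add hΨ hn₀ hdouble hu hv hu0 hv0]
  have hxy := hx.add hΨ hy
  have hsplit : (x + y)⁺ + x⁻ + y⁻ = x⁺ + y⁺ + (x + y)⁻ := by
    linear_combination posPart_sub_negPart (x + y) - posPart_sub_negPart x - posPart_sub_negPart y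
  have h := congrArg (dyadicBanachLim Ψ n₀) hsplit
  rw [hadd3 _ _ _ (hxy.posPart hΨ) (hx.negPart hΨ) (hy.negPart hΨ) (posPart_nonneg _)
      (negPart_nonneg _) (negPart_nonneg _),
    hadd3 _ _ _ (hx.posPart hΨ) (hy.posPart hΨ) (hxy.negPart hΨ) (posPart_nonneg _)
      (posPart_nonneg _) (negPart_nonneg _)] at h
  simp only [marcinkiewiczFunctional]
  linarith

lemma marcinkiewiczFunctional_smul (hΨ : ∀ n, 0 < n → 0 < Ψ n) (hn₀ : 0 < n₀)
    (hx : MemMarcinkiewicz Ψ x) (c : ℝ) :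
    marcinkiewiczFunctional Ψ n₀ (c • x) = c * marcinkiewiczFunctional Ψ n₀ x := by
  have hnonneg : ∀ c : ℝ, 0 ≤ c → ∀ x : ℕ → ℝ, MemMarcinkiewicz Ψ x →
      marcinkiewiczFunctional Ψ n₀ (c • x) = c * marcinkiewiczFunctional Ψ n₀ x :=
    fun c hc x hx => by
      rw [marcinkiewiczFunctional, marcinkiewiczFunctional, posPart_smul_of_nonneg hc,
        negPart_smul_of_nonneg hc, dyadicBanachLim_smul hΨ hn₀ (hx.posPart hΨ) hc,
        dyadicBanachLim_smul hΨ hn₀ (hx.negPart hΨ) hc, mul_sub]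
  rcases le_total 0 c with hc | hc
  · exact hnonneg c hc x hx
  · rw [show c • x = -c • -x by rw [neg_smul_neg], hnonneg _ (neg_nonneg.2 hc) _ (hx.neg hΨ),
      marcinkiewiczFunctional_neg, neg_mul_neg]

lemma abs_marcinkiewiczFunctional_le (hΨ : ∀ n, 0 < n → 0 < Ψ n) (hn₀ : 0 < n₀)
    (hx : MemMarcinkiewicz Ψ x) :
    |marcinkiewiczFunctional Ψ n₀ x| ≤ ⨆ n : ℕ, topSum x (n + 1) / Ψ (n + 1) := by
  obtain ⟨C, hC⟩ := hx.2
  have hle : ∀ y : ℕ → ℝ, (∀ m, |y m| ≤ |x m|) →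
      ∀ n, topSum y (n + 1) / Ψ (n + 1) ≤ ⨆ n : ℕ, topSum x (n + 1) / Ψ (n + 1) :=
    fun y hy n => (div_le_div_of_nonneg_right (topSum_le_of_abs_le hx.1 hy)
      (hΨ _ n.succ_pos).le).trans (le_ciSup ⟨C, by rintro _ ⟨n, rfl⟩; exact hC n⟩ n)
  have hpos := dyadicBanachLim_mem_Icc (n₀ := n₀) hΨ hn₀ (hx.posPart hΨ)
    (hle _ (abs_posPart_apply_le x))
  have hneg := dyadicBanachLim_mem_Icc (n₀ := n₀) hΨ hn₀ (hx.negPart hΨ)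
    (hle _ (abs_negPart_apply_le x))
  exact abs_sub_le_of_nonneg_of_le hpos.1 hpos.2 hneg.1 hneg.2

lemma marcinkiewiczFunctional_comp_perm (hx : Bounded x) (σ : Equiv.Perm ℕ) :
    marcinkiewiczFunctional Ψ n₀ (x ∘ σ) = marcinkiewiczFunctional Ψ n₀ x :=
  congrArg₂ (· - ·)
    (dyadicBanachLim_comp_perm (hx.of_abs_le (abs_posPart_apply_le x)) σ)
    (dyadicBanachLim_comp_perm (hx.of_abs_le (abs_negPart_apply_le x)) σ)

lemma exists_doubling_le (hΨ : ∀ n, 0 < n → 0 < Ψ n)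
    (hdouble : Tendsto (fun n : ℕ => Ψ (2 * n) / Ψ n) atTop (𝓝 1)) :
    ∃ n₀, 0 < n₀ ∧ ∀ n, n₀ ≤ n → Ψ (2 * n) ≤ 2 * Ψ n := by
  obtain ⟨N, hN⟩ := eventually_atTop.1 (hdouble.eventually (eventually_le_nhds one_lt_two))
  refine ⟨N + 1, N.succ_pos, fun n hn => ?_⟩
  rw [← div_le_iff₀ (hΨ n (by omega))]
  exact hN n (by omega)

lemma pos_of_monotoneOn (hΨ : MonotoneOn Ψ (Set.Ici 1)) (hΨ1 : 0 < Ψ 1) {n : ℕ} (hn : 0 < n) :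
    0 < Ψ n :=
  hΨ1.trans_le (hΨ (Set.mem_Ici.2 le_rfl) (Set.mem_Ici.2 hn) hn)

lemma exists_dyadic_block (hn₀ : 0 < n₀) {m : ℕ} (hm : n₀ ≤ m) :
    ∃ j, 2 ^ j * n₀ ≤ m ∧ m < 2 ^ (j + 1) * n₀ :=
  ⟨Nat.log 2 (m / n₀),
    (Nat.le_div_iff_mul_le hn₀).1 (Nat.pow_log_le_self 2 (Nat.div_pos hm hn₀).ne'),
    (Nat.div_lt_iff_lt_mul hn₀).1 (Nat.lt_pow_succ_log_self Nat.one_lt_two _)⟩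

lemma dyadic_doubling (hdouble : ∀ n, n₀ ≤ n → Ψ (2 * n) ≤ 2 * Ψ n) (j : ℕ) :
    Ψ (2 ^ (j + 1) * n₀) ≤ 2 * Ψ (2 ^ j * n₀) := by
  rw [pow_succ', mul_assoc]
  exact hdouble _ (Nat.le_mul_of_pos_left n₀ (Nat.two_pow_pos j))

lemma antitone_dyadic_density (hdouble : ∀ n, n₀ ≤ n → Ψ (2 * n) ≤ 2 * Ψ n) (hn₀ : 0 < n₀) :
    Antitone fun j : ℕ => Ψ (2 ^ j * n₀) / (2 ^ j * n₀) :=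
  antitone_nat_of_succ_le fun j => by
    rw [show Ψ (2 ^ (j + 1) * n₀) / (2 ^ (j + 1) * n₀) =
      Ψ (2 ^ (j + 1) * n₀) / 2 / (2 ^ j * n₀) by ring]
    exact div_le_div_of_nonneg_right (by linarith [dyadic_doubling hdouble j]) (by positivity)

/-- The increment of `Ψ` over the dyadic block `[2^j n₀, 2^(j+1) n₀)` containing `m`, spread
evenly over that block (with `j = Nat.log 2 (m / n₀)`). -/
def dyadicWitness (Ψ : ℕ → ℝ) (n₀ m : ℕ) : ℝ :=
  if m < n₀ then Ψ n₀ / n₀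
  else (Ψ (2 ^ (Nat.log 2 (m / n₀) + 1) * n₀) - Ψ (2 ^ Nat.log 2 (m / n₀) * n₀)) /
    (2 ^ Nat.log 2 (m / n₀) * n₀)

lemma dyadicWitness_eq (hn₀ : 0 < n₀) {j m : ℕ} (h₁ : 2 ^ j * n₀ ≤ m) (h₂ : m < 2 ^ (j + 1) * n₀) :
    dyadicWitness Ψ n₀ m = (Ψ (2 ^ (j + 1) * n₀) - Ψ (2 ^ j * n₀)) / (2 ^ j * n₀) := by
  have hj : Nat.log 2 (m / n₀) = j := Nat.log_eq_of_pow_le_of_lt_pow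
    ((Nat.le_div_iff_mul_le hn₀).2 h₁) ((Nat.div_lt_iff_lt_mul hn₀).2 h₂)
  have hm : ¬ m < n₀ := not_lt.2 ((Nat.le_mul_of_pos_left n₀ (Nat.two_pow_pos j)).trans h₁)
  rw [dyadicWitness, if_neg hm, hj]

lemma sum_range_dyadicWitness (hn₀ : 0 < n₀) (k : ℕ) :
    ∑ m ∈ range (2 ^ k * n₀), dyadicWitness Ψ n₀ m = Ψ (2 ^ k * n₀) := by
  induction k with
  | zero =>
    rw [pow_zero, one_mul, sum_congr rfl fun m hm => by rw [dyadicWitness, if_pos (mem_range.1 hm)],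
      sum_const, card_range, nsmul_eq_mul, mul_div_cancel₀ _ (by positivity)]
  | succ k ih =>
    have hle : 2 ^ k * n₀ ≤ 2 ^ (k + 1) * n₀ :=
      Nat.mul_le_mul_right _ (Nat.pow_le_pow_right two_pos k.le_succ)
    rw [← sum_range_add_sum_Ico _ hle, ih, sum_congr rfl fun m hm =>
      dyadicWitness_eq hn₀ (mem_Ico.1 hm).1 (mem_Ico.1 hm).2, sum_const, Nat.card_Ico,
      nsmul_eq_mul, Nat.cast_sub hle]
    push_cast
    field_simp
    ring

lemma dyadic_mono (hΨ : MonotoneOn Ψ (Set.Ici 1)) (hn₀ : 0 < n₀) (j : ℕ) :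
    Ψ (2 ^ j * n₀) ≤ Ψ (2 ^ (j + 1) * n₀) :=
  hΨ (Set.mem_Ici.2 (Nat.one_le_iff_ne_zero.2 (by positivity)))
    (Set.mem_Ici.2 (Nat.one_le_iff_ne_zero.2 (by positivity)))
    (Nat.mul_le_mul_right _ (Nat.pow_le_pow_right two_pos j.le_succ))

lemma dyadicWitness_nonneg (hΨ : MonotoneOn Ψ (Set.Ici 1)) (hΨ1 : 0 < Ψ 1) (hn₀ : 0 < n₀)
    (m : ℕ) : 0 ≤ dyadicWitness Ψ n₀ m := by
  unfold dyadicWitness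
  split_ifs
  · exact div_nonneg (pos_of_monotoneOn hΨ hΨ1 hn₀).le n₀.cast_nonneg
  · exact div_nonneg (sub_nonneg.2 (dyadic_mono hΨ hn₀ _)) (by positivity)

lemma dyadicWitness_le (hn₀ : 0 < n₀) (hdouble : ∀ n, n₀ ≤ n → Ψ (2 * n) ≤ 2 * Ψ n) {K m : ℕ}
    (h : 2 ^ K * n₀ ≤ m) : dyadicWitness Ψ n₀ m ≤ Ψ (2 ^ K * n₀) / (2 ^ K * n₀) := by
  obtain ⟨j, hj₁, hj₂⟩ :=
    exists_dyadic_block hn₀ ((Nat.le_mul_of_pos_left n₀ (Nat.two_pow_pos K)).trans h)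
  have hKj : K ≤ j := Nat.lt_succ_iff.1 <| (Nat.pow_lt_pow_iff_right Nat.one_lt_two).1 <|
    (Nat.mul_lt_mul_right hn₀).1 (h.trans_lt hj₂)
  rw [dyadicWitness_eq hn₀ hj₁ hj₂]
  calc (Ψ (2 ^ (j + 1) * n₀) - Ψ (2 ^ j * n₀)) / (2 ^ j * n₀)
      ≤ Ψ (2 ^ j * n₀) / (2 ^ j * n₀) :=
        div_le_div_of_nonneg_right (by linarith [dyadic_doubling hdouble j]) (by positivity)
    _ ≤ Ψ (2 ^ K * n₀) / (2 ^ K * n₀) := antitone_dyadic_density hdouble hn₀ hKj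

lemma sum_dyadicWitness_le (hΨ : MonotoneOn Ψ (Set.Ici 1)) (hΨ1 : 0 < Ψ 1) (hn₀ : 0 < n₀)
    (hdouble : ∀ n, n₀ ≤ n → Ψ (2 * n) ≤ 2 * Ψ n) {K : ℕ} {A : Finset ℕ} (hA : #A ≤ 2 ^ K * n₀) :
    ∑ m ∈ A, dyadicWitness Ψ n₀ m ≤ 2 * Ψ (2 ^ K * n₀) := by
  set N := 2 ^ K * n₀
  have hN : (0 : ℝ) < N := by positivity
  -- Below `N` the sum is at most the full partial sum `Ψ N`; from `N` on, each of the at most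
  -- `N` terms is at most `Ψ N / N`.
  have hlow : ∑ m ∈ A.filter (· < N), dyadicWitness Ψ n₀ m ≤ Ψ N :=
    (sum_le_sum_of_subset_of_nonneg (fun m hm => mem_range.2 (mem_filter.1 hm).2)
      fun m _ _ => dyadicWitness_nonneg hΨ hΨ1 hn₀ m).trans_eq (sum_range_dyadicWitness hn₀ K)
  have hhigh : ∑ m ∈ A.filter (¬ · < N), dyadicWitness Ψ n₀ m ≤ Ψ N := calc
    _ ≤ #(A.filter (¬ · < N)) • (Ψ N / N) := sum_le_card_nsmul _ _ _ fun m hm =>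
          (dyadicWitness_le hn₀ hdouble (not_lt.1 (mem_filter.1 hm).2)).trans_eq (by simp [N])
    _ ≤ N * (Ψ N / N) := by
          rw [nsmul_eq_mul]
          gcongr
          · exact div_nonneg (pos_of_monotoneOn hΨ hΨ1 (by positivity)).le hN.le
          · exact_mod_cast (card_filter_le _ _).trans hA
    _ = Ψ N := mul_div_cancel₀ _ hN.ne'
  rw [← sum_filter_add_sum_filter_not A (· < N)]
  linarith

lemma bounded_dyadicWitness (hΨ : MonotoneOn Ψ (Set.Ici 1)) (hΨ1 : 0 < Ψ 1) (hn₀ : 0 < n₀)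
    (hdouble : ∀ n, n₀ ≤ n → Ψ (2 * n) ≤ 2 * Ψ n) : Bounded (dyadicWitness Ψ n₀) := by
  refine ⟨Ψ n₀ / n₀, fun m => ?_⟩
  rw [abs_of_nonneg (dyadicWitness_nonneg hΨ hΨ1 hn₀ m)]
  by_cases hm : m < n₀
  · rw [dyadicWitness, if_pos hm]
  · simpa using dyadicWitness_le hn₀ hdouble (K := 0) (by simpa using hm)

lemma topSum_dyadicWitness_le (hΨ : MonotoneOn Ψ (Set.Ici 1)) (hΨ1 : 0 < Ψ 1) (hn₀ : 0 < n₀)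
    (hdouble : ∀ n, n₀ ≤ n → Ψ (2 * n) ≤ 2 * Ψ n) (K : ℕ) :
    topSum (dyadicWitness Ψ n₀) (2 ^ K * n₀) ≤ 2 * Ψ (2 ^ K * n₀) :=
  topSum_le_of_forall (bounded_dyadicWitness hΨ hΨ1 hn₀ hdouble) fun A hA => by
    simpa only [abs_of_nonneg (dyadicWitness_nonneg hΨ hΨ1 hn₀ _)] using
      sum_dyadicWitness_le hΨ hΨ1 hn₀ hdouble hA

lemma memMarcinkiewicz_dyadicWitness (hΨ : MonotoneOn Ψ (Set.Ici 1)) (hΨ1 : 0 < Ψ 1)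
    (hn₀ : 0 < n₀) (hdouble : ∀ n, n₀ ≤ n → Ψ (2 * n) ≤ 2 * Ψ n) :
    MemMarcinkiewicz Ψ (dyadicWitness Ψ n₀) := by
  have hw := bounded_dyadicWitness hΨ hΨ1 hn₀ hdouble
  refine ⟨hw, max (2 * Ψ n₀ / Ψ 1) 4, fun n => ?_⟩
  have hΨn := pos_of_monotoneOn hΨ hΨ1 n.succ_pos
  rw [div_le_iff₀ hΨn]
  rcases lt_or_ge (n + 1) n₀ with hn | hn
  · have h₀ := topSum_dyadicWitness_le hΨ hΨ1 hn₀ hdouble 0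
    rw [pow_zero, one_mul] at h₀
    calc topSum (dyadicWitness Ψ n₀) (n + 1) ≤ 2 * Ψ n₀ := (topSum_mono hw hn.le).trans h₀
      _ = 2 * Ψ n₀ / Ψ 1 * Ψ 1 := (div_mul_cancel₀ _ hΨ1.ne').symm
      _ ≤ max (2 * Ψ n₀ / Ψ 1) 4 * Ψ (n + 1) := by
          gcongr
          · exact le_max_left _ _
          · exact hΨ (Set.mem_Ici.2 le_rfl) (Set.mem_Ici.2 n.succ_pos) n.succ_pos
  · obtain ⟨j, hj₁, hj₂⟩ := exists_dyadic_block hn₀ hn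
    calc topSum (dyadicWitness Ψ n₀) (n + 1)
        ≤ 2 * Ψ (2 ^ (j + 1) * n₀) :=
          (topSum_mono hw hj₂.le).trans (topSum_dyadicWitness_le hΨ hΨ1 hn₀ hdouble (j + 1))
      _ ≤ 4 * Ψ (2 ^ j * n₀) := by linarith [dyadic_doubling hdouble j]
      _ ≤ max (2 * Ψ n₀ / Ψ 1) 4 * Ψ (n + 1) :=
          mul_le_mul (le_max_right _ _) (hΨ (Set.mem_Ici.2 (Nat.one_le_iff_ne_zero.2
            (by positivity))) (Set.mem_Ici.2 n.succ_pos) hj₁)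
            (pos_of_monotoneOn hΨ hΨ1 (by positivity)).le (by positivity)

lemma one_le_dyadicRatio_dyadicWitness (hΨ : MonotoneOn Ψ (Set.Ici 1)) (hΨ1 : 0 < Ψ 1)
    (hn₀ : 0 < n₀) (hdouble : ∀ n, n₀ ≤ n → Ψ (2 * n) ≤ 2 * Ψ n) (k : ℕ) :
    1 ≤ dyadicRatio Ψ n₀ (dyadicWitness Ψ n₀) k := by
  rw [dyadicRatio, le_div_iff₀ (pos_of_monotoneOn hΨ hΨ1 (by positivity)), one_mul,
    ← sum_range_dyadicWitness (Ψ := Ψ) hn₀ k]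
  simpa only [abs_of_nonneg (dyadicWitness_nonneg hΨ hΨ1 hn₀ _)] using
    sum_abs_le_topSum (bounded_dyadicWitness hΨ hΨ1 hn₀ hdouble) (card_range _).le

lemma one_le_marcinkiewiczFunctional_dyadicWitness (hΨ : MonotoneOn Ψ (Set.Ici 1))
    (hΨ1 : 0 < Ψ 1) (hn₀ : 0 < n₀) (hdouble : ∀ n, n₀ ≤ n → Ψ (2 * n) ≤ 2 * Ψ n) :
    1 ≤ marcinkiewiczFunctional Ψ n₀ (dyadicWitness Ψ n₀) := by
  rw [marcinkiewiczFunctional_of_nonneg fun m => dyadicWitness_nonneg hΨ hΨ1 hn₀ m]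
  exact le_banachLim ((memMarcinkiewicz_dyadicWitness hΨ hΨ1 hn₀ hdouble).bounded_dyadicRatio
    (fun _ => pos_of_monotoneOn hΨ hΨ1) hn₀) (one_le_dyadicRatio_dyadicWitness hΨ hΨ1 hn₀ hdouble)

end

end Marcinkiewicz

open Marcinkiewicz

theorem exists_symmetric_functional_on_marcinkiewicz_general (Ψ : ℕ → ℝ)
    (hΨ1 : Ψ 1 = 1)
    (hmono : ∀ m n : ℕ, 1 ≤ m → m < n → Ψ m < Ψ n)
    (hdouble : Tendsto (fun n : ℕ => Ψ (2 * n) / Ψ n) atTop (nhds 1)) :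
    let M : Set (ℕ → ℝ) := {x | (∃ C, ∀ n, |x n| ≤ C) ∧
      ∃ C, ∀ n : ℕ, (∑ k ∈ Finset.range (n + 1), dstar x k) / Ψ (n + 1) ≤ C}
    let Mnorm : (ℕ → ℝ) → ℝ :=
      fun x => ⨆ n : ℕ, (∑ k ∈ Finset.range (n + 1), dstar x k) / Ψ (n + 1)
    ∃ γ : (ℕ → ℝ) → ℝ,
      (∀ x ∈ M, ∀ y ∈ M, γ (x + y) = γ x + γ y) ∧
      (∀ (c : ℝ), ∀ x ∈ M, γ (c • x) = c * γ x) ∧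
      (∃ C : ℝ, ∀ x ∈ M, |γ x| ≤ C * Mnorm x) ∧
      (∀ x ∈ M, ∀ σ : Equiv.Perm ℕ, γ (x ∘ σ) = γ x) ∧
      (∃ x ∈ M, γ x ≠ 0) := by
  intro M Mnorm
  have hΨ : MonotoneOn Ψ (Set.Ici 1) := fun m hm n _ hmn =>
    hmn.eq_or_lt.elim (fun h => h ▸ le_rfl) fun h => (hmono m n hm h).le
  have hΨ1' : 0 < Ψ 1 := hΨ1 ▸ one_pos
  have hpos : ∀ n, 0 < n → 0 < Ψ n := fun n hn => pos_of_monotoneOn hΨ hΨ1' hn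
  obtain ⟨n₀, hn₀, hdouble₂⟩ := exists_doubling_le hpos hdouble
  refine ⟨marcinkiewiczFunctional Ψ n₀,
    fun x hx y hy => marcinkiewiczFunctional_add hpos hn₀ hdouble hx hy,
    fun c x hx => marcinkiewiczFunctional_smul hpos hn₀ hx c,
    ⟨1, fun x hx => (one_mul (Mnorm x)).symm ▸ abs_marcinkiewiczFunctional_le hpos hn₀ hx⟩,
    fun x hx σ => marcinkiewiczFunctional_comp_perm hx.1 σ,
    dyadicWitness Ψ n₀, memMarcinkiewicz_dyadicWitness hΨ hΨ1' hn₀ hdouble₂, ?_⟩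
  exact (one_pos.trans_le
    (one_le_marcinkiewiczFunctional_dyadicWitness hΨ hΨ1' hn₀ hdouble₂)).ne'

/-- If `Ψ(1) = 1`, `Ψ` increases to `∞`, `Ψ(n)/n → 0` and `Ψ(2n)/Ψ(n) → 1`, then the
Marcinkiewicz space `m_Ψ` admits a nonzero continuous symmetric linear functional. -/
theorem exists_symmetric_functional_on_marcinkiewicz (Ψ : ℕ → ℝ)
    (hΨ1 : Ψ 1 = 1)
    (hmono : ∀ m n : ℕ, 1 ≤ m → m < n → Ψ m < Ψ n)
    (htop : Tendsto Ψ atTop atTop)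
    (hquot : Tendsto (fun n : ℕ => Ψ n / n) atTop (nhds 0))
    (hdouble : Tendsto (fun n : ℕ => Ψ (2 * n) / Ψ n) atTop (nhds 1)) :
    let M : Set (ℕ → ℝ) := {x | (∃ C, ∀ n, |x n| ≤ C) ∧
      ∃ C, ∀ n : ℕ, (∑ k ∈ Finset.range (n + 1), dstar x k) / Ψ (n + 1) ≤ C}
    let Mnorm : (ℕ → ℝ) → ℝ :=
      fun x => ⨆ n : ℕ, (∑ k ∈ Finset.range (n + 1), dstar x k) / Ψ (n + 1)
    ∃ γ : (ℕ → ℝ) → ℝ,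
      (∀ x ∈ M, ∀ y ∈ M, γ (x + y) = γ x + γ y) ∧
      (∀ (c : ℝ), ∀ x ∈ M, γ (c • x) = c * γ x) ∧
      (∃ C : ℝ, ∀ x ∈ M, |γ x| ≤ C * Mnorm x) ∧
      (∀ x ∈ M, ∀ σ : Equiv.Perm ℕ, γ (x ∘ σ) = γ x) ∧
      (∃ x ∈ M, γ x ≠ 0) :=
  exists_symmetric_functional_on_marcinkiewicz_general Ψ hΨ1 hmono hdouble
end

section
/- There exists a Banach limit L on ℓ∞ that is invariant under the doubling dilation operator: L(x₁, x₂, x₃, …) = L(x₁, x₁, x₂, x₂, x₃, x₃, …) for every bounded sequence x. -/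
/-!
Average `x` over the dyadic blocks `[2 ^ j, 2 ^ (j + 1))`. The dilation `n ↦ n / 2` maps block
`j + 1` two-to-one onto block `j`, so it shifts the sequence of block means by one index exactly,
while the shift `n ↦ n + 1` changes the `j`-th block mean by `O(2 ^ (-j))`. Cesàro averaging of the
block means therefore gives means that are asymptotically invariant under both operators, and a
weak-* limit point of these means (Banach–Alaoglu, along an ultrafilter) is the Banach limit.
-/

open Filter Topology Finset
open scoped BoundedContinuousFunction

noncomputable def cesaroMean (u : ℕ → ℝ) (N : ℕ) : ℝ := (N : ℝ)⁻¹ * ∑ i ∈ range N, u i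

theorem abs_cesaroMean_le {u : ℕ → ℝ} {C : ℝ} (hu : ∀ i, |u i| ≤ C) (N : ℕ) :
    |cesaroMean u N| ≤ C := by
  rcases N.eq_zero_or_pos with rfl | hN
  · simpa [cesaroMean] using (abs_nonneg _).trans (hu 0)
  · have hN' : (0 : ℝ) < N := by exact_mod_cast hN
    rw [cesaroMean, abs_mul, abs_inv, Nat.abs_cast, inv_mul_le_iff₀ hN']
    calc |∑ i ∈ range N, u i| ≤ ∑ i ∈ range N, |u i| := abs_sum_le_sum_abs _ _
      _ ≤ ∑ _i ∈ range N, C := sum_le_sum fun i _ => hu i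
      _ = N * C := by rw [sum_const, card_range, nsmul_eq_mul]

theorem cesaroMean_nonneg {u : ℕ → ℝ} (hu : ∀ i, 0 ≤ u i) (N : ℕ) : 0 ≤ cesaroMean u N :=
  mul_nonneg (by positivity) (sum_nonneg fun i _ => hu i)

theorem tendsto_cesaroMean {u : ℕ → ℝ} {l : ℝ} (hu : Tendsto u atTop (𝓝 l)) :
    Tendsto (cesaroMean u) atTop (𝓝 l) :=
  hu.cesaro

theorem cesaroMean_sub (u v : ℕ → ℝ) (N : ℕ) :
    cesaroMean u N - cesaroMean v N = cesaroMean (fun i => u i - v i) N := by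
  simp only [cesaroMean, sum_sub_distrib, mul_sub]

theorem cesaroMean_comp_succ_sub (u : ℕ → ℝ) (N : ℕ) :
    cesaroMean (fun i => u (i + 1)) N - cesaroMean u N = (N : ℝ)⁻¹ * (u N - u 0) := by
  rw [cesaroMean_sub, cesaroMean, sum_range_sub]

theorem abs_cesaroMean_comp_succ_sub_le {u : ℕ → ℝ} {C : ℝ} (hu : ∀ i, |u i| ≤ C) (N : ℕ) :
    |cesaroMean (fun i => u (i + 1)) N - cesaroMean u N| ≤ (N : ℝ)⁻¹ * (2 * C) := by
  rw [cesaroMean_comp_succ_sub, abs_mul, abs_inv, Nat.abs_cast]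
  gcongr
  linarith [abs_sub (u N) (u 0), hu N, hu 0]

theorem tendsto_cesaroMean_comp_succ_sub {u : ℕ → ℝ} {C : ℝ} (hu : ∀ i, |u i| ≤ C) :
    Tendsto (fun N => cesaroMean (fun i => u (i + 1)) N - cesaroMean u N) atTop (𝓝 0) := by
  refine squeeze_zero_norm (abs_cesaroMean_comp_succ_sub_le hu) ?_
  simpa using (tendsto_inv_atTop_zero.comp tendsto_natCast_atTop_atTop).mul_const (2 * C)

theorem sum_range_two_mul_comp_div_two {M : Type*} [AddCommMonoid M] (f : ℕ → M) (n : ℕ) :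
    ∑ i ∈ range (2 * n), f (i / 2) = 2 • ∑ i ∈ range n, f i := by
  induction n with
  | zero => simp
  | succ n ih =>
    rw [mul_add_one, sum_range_succ, sum_range_succ, ih, sum_range_succ, smul_add,
      Nat.mul_div_cancel_left _ two_pos, show (2 * n + 1) / 2 = n by omega]
    abel

noncomputable def dyadicBlockMean (x : ℕ → ℝ) (j : ℕ) : ℝ :=
  cesaroMean (fun i => x (2 ^ j + i)) (2 ^ j)

theorem dyadicBlockMean_eq (x : ℕ → ℝ) (j : ℕ) :
    dyadicBlockMean x j = 2 * cesaroMean x (2 ^ (j + 1)) - cesaroMean x (2 ^ j) := by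
  rw [dyadicBlockMean, cesaroMean, cesaroMean, cesaroMean, pow_succ, mul_two, sum_range_add]
  push_cast
  field_simp
  ring

theorem tendsto_dyadicBlockMean {x : ℕ → ℝ} {a : ℝ} (hx : Tendsto x atTop (𝓝 a)) :
    Tendsto (dyadicBlockMean x) atTop (𝓝 a) := by
  have hpow : Tendsto (fun j : ℕ => 2 ^ j) atTop atTop :=
    tendsto_pow_atTop_atTop_of_one_lt one_lt_two
  have h := tendsto_cesaroMean hx
  have := ((h.comp (hpow.comp (tendsto_add_atTop_nat 1))).const_mul 2).sub (h.comp hpow)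
  rw [two_mul, add_sub_cancel_right] at this
  exact this.congr fun j => (dyadicBlockMean_eq x j).symm

theorem abs_dyadicBlockMean_shift_sub_le {x : ℕ → ℝ} {C : ℝ} (hx : ∀ n, |x n| ≤ C) (j : ℕ) :
    |dyadicBlockMean (fun n => x (n + 1)) j - dyadicBlockMean x j| ≤ (2 ^ j : ℝ)⁻¹ * (2 * C) := by
  have := abs_cesaroMean_comp_succ_sub_le (u := fun i => x (2 ^ j + i)) (fun i => hx _) (2 ^ j)
  push_cast at this
  exact this

theorem dyadicBlockMean_dilation (x : ℕ → ℝ) (j : ℕ) :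
    dyadicBlockMean (fun n => x (n / 2)) (j + 1) = dyadicBlockMean x j := by
  have hdiv : ∀ i, (2 ^ (j + 1) + i) / 2 = 2 ^ j + i / 2 := fun i => by rw [pow_succ]; omega
  simp only [dyadicBlockMean, cesaroMean, hdiv]
  rw [pow_succ', sum_range_two_mul_comp_div_two (fun i => x (2 ^ j + i)), nsmul_eq_mul]
  push_cast
  field_simp

noncomputable def dyadicMean (x : ℕ → ℝ) (J : ℕ) : ℝ := cesaroMean (dyadicBlockMean x) J

theorem abs_dyadicMean_le {x : ℕ → ℝ} {C : ℝ} (hx : ∀ n, |x n| ≤ C) (J : ℕ) :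
    |dyadicMean x J| ≤ C :=
  abs_cesaroMean_le (fun _ => abs_cesaroMean_le (fun _ => hx _) _) J

theorem dyadicMean_nonneg {x : ℕ → ℝ} (hx : ∀ n, 0 ≤ x n) (J : ℕ) : 0 ≤ dyadicMean x J :=
  cesaroMean_nonneg (fun _ => cesaroMean_nonneg (fun _ => hx _) _) J

theorem tendsto_dyadicMean {x : ℕ → ℝ} {a : ℝ} (hx : Tendsto x atTop (𝓝 a)) :
    Tendsto (dyadicMean x) atTop (𝓝 a) :=
  tendsto_cesaroMean (tendsto_dyadicBlockMean hx)

theorem tendsto_dyadicMean_shift_sub {x : ℕ → ℝ} {C : ℝ} (hx : ∀ n, |x n| ≤ C) :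
    Tendsto (fun J => dyadicMean (fun n => x (n + 1)) J - dyadicMean x J) atTop (𝓝 0) := by
  have hblock : Tendsto (fun j => dyadicBlockMean (fun n => x (n + 1)) j - dyadicBlockMean x j)
      atTop (𝓝 0) := by
    refine squeeze_zero_norm (abs_dyadicBlockMean_shift_sub_le hx) ?_
    simpa using (tendsto_inv_atTop_zero.comp
      (tendsto_pow_atTop_atTop_of_one_lt one_lt_two)).mul_const (2 * C)
  simpa only [dyadicMean, cesaroMean_sub] using tendsto_cesaroMean hblock

theorem tendsto_dyadicMean_dilation_sub {x : ℕ → ℝ} {C : ℝ} (hx : ∀ n, |x n| ≤ C) :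
    Tendsto (fun J => dyadicMean (fun n => x (n / 2)) J - dyadicMean x J) atTop (𝓝 0) := by
  have h := (tendsto_cesaroMean_comp_succ_sub
    (u := dyadicBlockMean (fun n => x (n / 2))) fun _ => abs_cesaroMean_le (fun _ => hx _) _).neg
  simpa only [dyadicMean, dyadicBlockMean_dilation, neg_sub, neg_zero] using h

theorem BoundedContinuousFunction.abs_apply_le_norm {α : Type*} [TopologicalSpace α]
    (f : α →ᵇ ℝ) (a : α) : |f a| ≤ ‖f‖ := by
  simpa using f.norm_coe_le_norm a

noncomputable def dyadicMeanCLM (J : ℕ) : (ℕ →ᵇ ℝ) →L[ℝ] ℝ :=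
  (J : ℝ)⁻¹ • ∑ j ∈ range J, ((2 ^ j : ℕ) : ℝ)⁻¹ •
    ∑ i ∈ range (2 ^ j), BoundedContinuousFunction.evalCLM ℝ (2 ^ j + i)

theorem dyadicMeanCLM_apply (J : ℕ) (x : ℕ →ᵇ ℝ) : dyadicMeanCLM J x = dyadicMean x J := by
  simp [dyadicMeanCLM, dyadicMean, dyadicBlockMean, cesaroMean]

theorem norm_dyadicMeanCLM_le (J : ℕ) : ‖dyadicMeanCLM J‖ ≤ 1 := by
  refine (dyadicMeanCLM J).opNorm_le_bound zero_le_one fun x => ?_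
  rw [one_mul, dyadicMeanCLM_apply, Real.norm_eq_abs]
  exact abs_dyadicMean_le x.abs_apply_le_norm J

theorem exists_tendsto_ultrafilter_of_norm_le {𝕜 E ι : Type*} [NontriviallyNormedField 𝕜]
    [ProperSpace 𝕜] [SeminormedAddCommGroup E] [NormedSpace 𝕜 E] (U : Ultrafilter ι)
    (φ : ι → E →L[𝕜] 𝕜) {r : ℝ} (hφ : ∀ i, ‖φ i‖ ≤ r) :
    ∃ L : E →L[𝕜] 𝕜, ‖L‖ ≤ r ∧ ∀ x, Tendsto (fun i => φ i x) U (𝓝 (L x)) := by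
  obtain ⟨L, hL, hφL⟩ := (WeakDual.isCompact_closedBall (𝕜 := 𝕜) (E := E) 0 r).ultrafilter_le_nhds
    (U.map (StrongDual.toWeakDual ∘ φ)) <| by
      rw [Ultrafilter.coe_map, le_principal_iff]
      exact Filter.mem_map.2 (univ_mem' fun i => by simpa using hφ i)
  refine ⟨WeakDual.toStrongDual L, by simpa using hL, fun x => ?_⟩
  exact ((WeakDual.eval_continuous x).tendsto L).comp hφL

/-- There exists a Banach limit `L` on `ℓ∞` (a norm-one continuous linear functional
extending the limit, nonnegative on nonnegative sequences and shift invariant) which is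
moreover invariant under the doubling dilation `(x₁,x₂,x₃,…) ↦ (x₁,x₁,x₂,x₂,x₃,x₃,…)`. -/
theorem exists_dilation_invariant_banach_limit :
    ∃ L : BoundedContinuousFunction ℕ ℝ →L[ℝ] ℝ,
      ‖L‖ = 1 ∧
      (∀ (x : BoundedContinuousFunction ℕ ℝ) (a : ℝ),
        Tendsto (fun n => x n) atTop (nhds a) → L x = a) ∧
      (∀ x : BoundedContinuousFunction ℕ ℝ, (∀ n, 0 ≤ x n) → 0 ≤ L x) ∧
      (∀ x y : BoundedContinuousFunction ℕ ℝ, (∀ n, y n = x (n + 1)) → L y = L x) ∧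
      (∀ x y : BoundedContinuousFunction ℕ ℝ, (∀ n, y n = x (n / 2)) → L y = L x) := by
  obtain ⟨U, hU⟩ := exists_ultrafilter_le (atTop : Filter ℕ)
  obtain ⟨L, hL_norm, hL⟩ :=
    exists_tendsto_ultrafilter_of_norm_le U dyadicMeanCLM norm_dyadicMeanCLM_le
  simp only [dyadicMeanCLM_apply] at hL
  have regular (x : ℕ →ᵇ ℝ) (a : ℝ) (hx : Tendsto (fun n => x n) atTop (𝓝 a)) : L x = a :=
    tendsto_nhds_unique (hL x) ((tendsto_dyadicMean hx).mono_left hU)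
  have invariant {x y : ℕ →ᵇ ℝ}
      (h : Tendsto (fun J => dyadicMean y J - dyadicMean x J) atTop (𝓝 0)) : L y = L x :=
    sub_eq_zero.1 (tendsto_nhds_unique ((hL y).sub (hL x)) (h.mono_left hU))
  refine ⟨L, le_antisymm hL_norm ?_, regular,
    fun x hx => ge_of_tendsto (hL x) (.of_forall (dyadicMean_nonneg hx)),
    fun x y hxy => invariant ?_, fun x y hxy => invariant ?_⟩
  · have h1 : L (.const ℕ 1) = 1 := regular _ 1 tendsto_const_nhds
    simpa [h1] using L.le_opNorm (.const ℕ 1)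
  · rw [show ⇑y = fun n => x (n + 1) from funext hxy]
    exact tendsto_dyadicMean_shift_sub x.abs_apply_le_norm
  · rw [show ⇑y = fun n => x (n / 2) from funext hxy]
    exact tendsto_dyadicMean_dilation_sub x.abs_apply_le_norm
end

section
/- There exists a nonnegative null sequence x in the Marcinkiewicz space m_Ψ with Ψ(n) = log(n+1) such that the sequence ( (Σ_{k=1}^n x*_k)/log(n+1) )ₙ is bounded (indeed by 2) but does not converge: it takes values 1 and ≤ 1/2 infinitely often along a suitable sequence of indices. -/
/-!
Let `x` be the sequence of slopes of the piecewise-linear interpolation of `t ↦ log (t + 1)` at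
the nodes `0` and `2 ^ 8 ^ j - 1`. Concavity of the logarithm makes `x` decreasing, so `x* = x`,
and keeps its partial sums below `log (n + 1)`; hence the ratios are at most `1` and
`x n ≤ log (n + 1) / n → 0`. At the nodes the partial sums equal `log (n + 1)`. A node `N - 1`
is followed by `N ^ 8 - 1`, so on that block the slope is about `7 log N / N ^ 8` and the
partial sum at `N ^ 4 - 1` is still about `log N`, a quarter of `log (N ^ 4)`.
-/

open scoped Classical

open Filter
open Topology

section SecantInterpolation

variable {f : ℝ → ℝ} {b : ℕ → ℕ}

def blockIndex (b : ℕ → ℕ) (n : ℕ) : ℕ := Nat.findGreatest (fun j => b j ≤ n) n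

lemma blockIndex_mono (b : ℕ → ℕ) : Monotone (blockIndex b) :=
  fun _ _ hmn => Nat.findGreatest_mono (fun _ h => h.trans hmn) hmn

lemma apply_blockIndex_le (h0 : b 0 = 0) (n : ℕ) : b (blockIndex b n) ≤ n :=
  Nat.findGreatest_spec (P := fun j => b j ≤ n) (Nat.zero_le n) (by simp [h0])

lemma lt_apply_blockIndex_succ (hb : StrictMono b) (n : ℕ) : n < b (blockIndex b n + 1) := by
  by_contra! h
  exact Nat.findGreatest_is_greatest (P := fun j => b j ≤ n) (Nat.lt_succ_self _)
    (hb.le_apply.trans h) h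

lemma blockIndex_eq (hb : StrictMono b) {j n : ℕ} (h₁ : b j ≤ n) (h₂ : n < b (j + 1)) :
    blockIndex b n = j := by
  refine Nat.findGreatest_eq_iff.2 ⟨hb.le_apply.trans h₁, fun _ => h₁, fun k hjk _ hk => ?_⟩
  exact (hb.monotone (Nat.succ_le_of_lt hjk)).not_gt (hk.trans_lt h₂)

lemma blockIndex_apply (hb : StrictMono b) (j : ℕ) : blockIndex b (b j) = j :=
  blockIndex_eq hb le_rfl (hb (Nat.lt_succ_self j))

noncomputable def secantSeq (f : ℝ → ℝ) (b : ℕ → ℕ) (n : ℕ) : ℝ :=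
  slope f (b (blockIndex b n)) (b (blockIndex b n + 1))

noncomputable def secantInterp (f : ℝ → ℝ) (b : ℕ → ℕ) (n : ℕ) : ℝ :=
  f (b (blockIndex b n)) + (n - b (blockIndex b n)) * secantSeq f b n

lemma secantInterp_apply (hb : StrictMono b) (j : ℕ) : secantInterp f b (b j) = f (b j) := by
  simp [secantInterp, blockIndex_apply hb]

lemma secantInterp_succ (hb : StrictMono b) (h0 : b 0 = 0) (n : ℕ) :
    secantInterp f b (n + 1) = secantInterp f b n + secantSeq f b n := by
  have hJn := apply_blockIndex_le h0 n
  have hnJ := lt_apply_blockIndex_succ hb n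
  simp only [secantInterp, secantSeq]
  rcases (Nat.succ_le_of_lt hnJ).lt_or_eq with hlt | heq
  · rw [blockIndex_eq hb (by omega) hlt]
    push_cast
    ring
  · rw [← Nat.succ_eq_add_one, heq, blockIndex_apply hb, ← heq]
    generalize blockIndex b n = J at hJn heq ⊢
    have := sub_smul_slope f (b J : ℝ) (b (J + 1))
    rw [smul_eq_mul, vsub_eq_sub, ← heq] at this
    push_cast at this ⊢
    linear_combination -this

lemma sum_secantSeq (hb : StrictMono b) (h0 : b 0 = 0) (n : ℕ) :
    ∑ k ∈ Finset.range n, secantSeq f b k = secantInterp f b n - f 0 := by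
  induction n with
  | zero =>
    have h := secantInterp_apply (f := f) hb 0
    rw [h0] at h
    simp [h]
  | succ n ih => rw [Finset.sum_range_succ, ih, secantInterp_succ hb h0]; ring

lemma secantSeq_nonneg (hf : MonotoneOn f (Set.Ici 0)) (n : ℕ) :
    0 ≤ secantSeq f b n :=
  hf.slope_nonneg (Set.mem_Ici.2 (Nat.cast_nonneg _)) (Set.mem_Ici.2 (Nat.cast_nonneg _))

lemma secantSeq_antitone (hb : StrictMono b) (hf : ConcaveOn ℝ (Set.Ici 0) f) :
    Antitone (secantSeq f b) := by
  have hslope : Antitone fun j => slope f (b j) (b (j + 1)) := by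
    refine antitone_nat_of_succ_le fun j => ?_
    simp only [slope_def_field]
    exact hf.slope_anti_adjacent (Set.mem_Ici.2 (Nat.cast_nonneg _))
      (Set.mem_Ici.2 (Nat.cast_nonneg _)) (Nat.cast_lt.2 (hb j.lt_succ_self))
      (Nat.cast_lt.2 (hb (j + 1).lt_succ_self))
  exact hslope.comp_monotone (blockIndex_mono b)

lemma secantInterp_le (hb : StrictMono b) (h0 : b 0 = 0) (hf : ConcaveOn ℝ (Set.Ici 0) f)
    (n : ℕ) : secantInterp f b n ≤ f n := by
  set a : ℝ := (b (blockIndex b n) : ℝ)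
  set c : ℝ := (b (blockIndex b n + 1) : ℝ)
  have han : a ≤ n := Nat.cast_le.2 (apply_blockIndex_le h0 n)
  have hnc : (n : ℝ) < c := Nat.cast_lt.2 (lt_apply_blockIndex_succ hb n)
  rcases han.lt_or_eq with han | han
  · have key := hf.neg.secant_mono_aux1 (Set.mem_Ici.2 (Nat.cast_nonneg _))
      (Set.mem_Ici.2 (Nat.cast_nonneg _)) han hnc
    simp only [Pi.neg_apply] at key
    have hac : 0 < c - a := by linarith
    rw [secantInterp, secantSeq, slope_def_field]
    rw [← sub_nonneg] at key ⊢
    have : f n - (f a + (n - a) * ((f c - f a) / (c - a))) =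
        ((c - n) * -f a + (n - a) * -f c - (c - a) * -f n) / (c - a) := by
      field_simp; ring
    rw [this]; positivity
  · simp [secantInterp, a, ← han]

end SecantInterpolation

lemma dstar_eq_of_antitone {x : ℕ → ℝ} (hx : Antitone x) (hx0 : ∀ n, 0 ≤ x n) (n : ℕ) :
    dstar x n = x n := by
  have hbdd : ∀ J : Finset ℕ, BddAbove {b : ℝ | ∃ k, k ∉ J ∧ b = |x k|} := by
    refine fun J => ⟨x 0, ?_⟩
    rintro _ ⟨k, -, rfl⟩
    exact (abs_of_nonneg (hx0 k)).trans_le (hx (Nat.zero_le k))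
  have htail : sSup {b : ℝ | ∃ k, k ∉ Finset.range n ∧ b = |x k|} = x n := by
    refine IsGreatest.csSup_eq ⟨⟨n, by simp, (abs_of_nonneg (hx0 n)).symm⟩, ?_⟩
    rintro _ ⟨k, hk, rfl⟩
    rw [abs_of_nonneg (hx0 k)]
    exact hx (by simpa using hk)
  refine IsLeast.csInf_eq ⟨⟨Finset.range n, by simp, htail.symm⟩, ?_⟩
  rintro _ ⟨J, hJ, rfl⟩
  obtain ⟨k, hk, hkJ⟩ := Finset.exists_mem_notMem_of_card_lt_card
    (t := Finset.range (n + 1)) (by simpa using Nat.lt_succ_of_le hJ)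
  calc x n ≤ x k := hx (Nat.lt_succ_iff.1 (Finset.mem_range.1 hk))
    _ = |x k| := (abs_of_nonneg (hx0 k)).symm
    _ ≤ _ := le_csSup (hbdd J) ⟨k, hkJ, rfl⟩

lemma tendsto_zero_of_antitone_of_sum_le {x g : ℕ → ℝ} (hx : Antitone x)
    (hx0 : ∀ n, 0 ≤ x n) (hsum : ∀ n, ∑ k ∈ Finset.range n, x k ≤ g n)
    (hg : Tendsto (fun n => g n / n) atTop (𝓝 0)) : Tendsto x atTop (𝓝 0) := by
  refine tendsto_of_tendsto_of_tendsto_of_le_of_le' tendsto_const_nhds hg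
    (Eventually.of_forall hx0) ((eventually_ge_atTop 1).mono fun n hn => ?_)
  rw [le_div_iff₀ (by exact_mod_cast hn), mul_comm]
  calc (n : ℝ) * x n = ∑ _k ∈ Finset.range n, x n := by simp
    _ ≤ ∑ k ∈ Finset.range n, x k :=
      Finset.sum_le_sum fun k hk => hx (Finset.mem_range.1 hk).le
    _ ≤ g n := hsum n

lemma not_tendsto_of_frequently_le_of_frequently_ge {α β : Type*} [LinearOrder β]
    [TopologicalSpace β] [OrderClosedTopology β] {F : Filter α} {u : α → β} {a c : β}
    (hca : c < a) (hc : ∃ᶠ n in F, u n ≤ c) (ha : ∃ᶠ n in F, a ≤ u n) (l : β) :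
    ¬ Tendsto u F (𝓝 l) := fun h =>
  ((isClosed_Ici.mem_of_frequently_of_tendsto ha h).trans
    (isClosed_Iic.mem_of_frequently_of_tendsto hc h)).not_gt hca

lemma concaveOn_log_add_one : ConcaveOn ℝ (Set.Ici 0) fun t : ℝ => Real.log (t + 1) := by
  have := (strictConcaveOn_log_Ioi.concaveOn.translate_right 1).subset
    (fun t (ht : 0 ≤ t) => show 0 < 1 + t by linarith) (convex_Ici 0)
  exact this.congr fun t _ => by simp [add_comm]

lemma monotoneOn_log_add_one : MonotoneOn (fun t : ℝ => Real.log (t + 1)) (Set.Ici 0) :=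
  fun s hs _ _ hst => Real.log_le_log (by linarith [Set.mem_Ici.1 hs]) (by linarith)

lemma tendsto_log_add_one_div_natCast :
    Tendsto (fun n : ℕ => Real.log (n + 1) / n) atTop (𝓝 0) := by
  have := (Real.tendsto_pow_log_div_mul_add_atTop 1 (-1) 1 one_ne_zero).comp
    (tendsto_atTop_add_const_right atTop 1 tendsto_natCast_atTop_atTop)
  simpa [Function.comp_def] using this

def breakpoint : ℕ → ℕ
  | 0 => 0
  | j + 1 => 2 ^ 8 ^ j - 1

lemma cast_breakpoint_succ (j : ℕ) : (breakpoint (j + 1) : ℝ) = (2 : ℝ) ^ 8 ^ j - 1 := by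
  rw [breakpoint, Nat.cast_sub Nat.one_le_two_pow]
  norm_num

lemma breakpoint_strictMono : StrictMono breakpoint := by
  refine strictMono_nat_of_lt_succ fun j => ?_
  cases j with
  | zero => decide
  | succ j =>
    have : 2 ^ 8 ^ j < 2 ^ 8 ^ (j + 1) :=
      Nat.pow_lt_pow_right (by norm_num) (Nat.pow_lt_pow_right (by norm_num) j.lt_succ_self)
    exact Nat.sub_lt_sub_right Nat.one_le_two_pow this

lemma breakpoint_succ_le (j : ℕ) : breakpoint (j + 1) ≤ 2 ^ (4 * 8 ^ j) - 1 := by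
  have : 2 ^ 8 ^ j ≤ 2 ^ (4 * 8 ^ j) := Nat.pow_le_pow_right (by norm_num) (by omega)
  simp only [breakpoint]
  omega

lemma lt_breakpoint_add_two (j : ℕ) : 2 ^ (4 * 8 ^ j) - 1 < breakpoint (j + 2) := by
  have h8 : 1 ≤ 8 ^ j := Nat.one_le_pow j 8 (by norm_num)
  have : 2 ^ (4 * 8 ^ j) < 2 ^ 8 ^ (j + 1) :=
    Nat.pow_lt_pow_right (by norm_num) (by rw [pow_succ]; omega)
  simp only [breakpoint]
  have : 1 ≤ 2 ^ (4 * 8 ^ j) := Nat.one_le_two_pow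
  omega

lemma log_add_secant_le (P : ℝ) (hP : 2 ≤ P) :
    Real.log P + (P ^ 4 - P) * ((Real.log (P ^ 8) - Real.log P) / (P ^ 8 - P)) ≤
      1 / 2 * Real.log (P ^ 4) := by
  have hlog : 0 < Real.log P := Real.log_pos (by linarith)
  have hP3 : 8 ≤ P ^ 3 := by nlinarith [sq_nonneg P]
  have hP4 : 8 * P ≤ P ^ 4 := by nlinarith
  have hgap : 7 * (P ^ 4 - P) ≤ P ^ 8 - P := by nlinarith
  have hden : 0 < P ^ 8 - P := by nlinarith
  have hincr : (P ^ 4 - P) * ((8 * Real.log P - Real.log P) / (P ^ 8 - P)) ≤ Real.log P := by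
    rw [mul_div_assoc', div_le_iff₀ hden]
    nlinarith
  rw [Real.log_pow, Real.log_pow]
  push_cast
  linarith

lemma secantInterp_log_le_half (j : ℕ) :
    secantInterp (fun t : ℝ => Real.log (t + 1)) breakpoint (2 ^ (4 * 8 ^ j) - 1) ≤
      1 / 2 * Real.log (((2 ^ (4 * 8 ^ j) - 1 : ℕ) : ℝ) + 1) := by
  have hblock : blockIndex breakpoint (2 ^ (4 * 8 ^ j) - 1) = j + 1 :=
    blockIndex_eq breakpoint_strictMono (breakpoint_succ_le j) (lt_breakpoint_add_two j)
  have hcast : ((2 ^ (4 * 8 ^ j) - 1 : ℕ) : ℝ) + 1 = ((2 : ℝ) ^ 8 ^ j) ^ 4 := by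
    rw [Nat.cast_sub Nat.one_le_two_pow, ← pow_mul, mul_comm]
    norm_num
  have hnext : (2 : ℝ) ^ 8 ^ (j + 1) = ((2 : ℝ) ^ 8 ^ j) ^ 8 := by
    rw [← pow_mul, pow_succ]
  have key := log_add_secant_le ((2 : ℝ) ^ 8 ^ j)
    (le_self_pow₀ (by norm_num) (pow_ne_zero _ (by norm_num)))
  simp only [secantInterp, secantSeq, slope_def_field, hblock, cast_breakpoint_succ, hcast]
  rw [show (2 ^ (4 * 8 ^ j) - 1 : ℕ) = ((2 : ℝ) ^ 8 ^ j) ^ 4 - 1 by linarith [hcast]]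
  convert key using 3 <;> simp [hnext]

noncomputable def logSecantSeq : ℕ → ℝ :=
  secantSeq (fun t : ℝ => Real.log (t + 1)) breakpoint

lemma logSecantSeq_nonneg (n : ℕ) : 0 ≤ logSecantSeq n :=
  secantSeq_nonneg monotoneOn_log_add_one n

lemma logSecantSeq_antitone : Antitone logSecantSeq :=
  secantSeq_antitone breakpoint_strictMono concaveOn_log_add_one

lemma sum_logSecantSeq (n : ℕ) :
    ∑ k ∈ Finset.range n, logSecantSeq k =
      secantInterp (fun t : ℝ => Real.log (t + 1)) breakpoint n := by
  simp [logSecantSeq, sum_secantSeq breakpoint_strictMono rfl]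

lemma sum_dstar_logSecantSeq (n : ℕ) :
    ∑ k ∈ Finset.range n, dstar logSecantSeq k =
      secantInterp (fun t : ℝ => Real.log (t + 1)) breakpoint n := by
  simp only [dstar_eq_of_antitone logSecantSeq_antitone logSecantSeq_nonneg, sum_logSecantSeq]

lemma sum_logSecantSeq_le (n : ℕ) :
    ∑ k ∈ Finset.range n, logSecantSeq k ≤ Real.log (n + 1) :=
  (sum_logSecantSeq n).trans_le
    (secantInterp_le breakpoint_strictMono rfl concaveOn_log_add_one n)

lemma tendsto_logSecantSeq : Tendsto logSecantSeq atTop (𝓝 0) :=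
  tendsto_zero_of_antitone_of_sum_le logSecantSeq_antitone logSecantSeq_nonneg
    sum_logSecantSeq_le tendsto_log_add_one_div_natCast

/-- In the Marcinkiewicz space with `Ψ(n) = log (n+1)` there is a nonnegative null
sequence `x` whose sequence of ratios `(∑_{k=1}^n x*_k) / log (n+1)` is bounded by `2`
but does not converge: it equals `1` infinitely often and is `≤ 1/2` infinitely often. -/
theorem marcinkiewicz_ratios_need_not_converge :
    ∃ x : ℕ → ℝ, (∀ n, 0 ≤ x n) ∧ Tendsto x atTop (nhds 0) ∧
      (∀ n : ℕ, 1 ≤ n →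
        (∑ k ∈ Finset.range n, dstar x k) / Real.log (n + 1) ≤ 2) ∧
      (∀ N : ℕ, ∃ n ≥ N, 1 ≤ n ∧
        (∑ k ∈ Finset.range n, dstar x k) / Real.log (n + 1) = 1) ∧
      (∀ N : ℕ, ∃ n ≥ N, 1 ≤ n ∧
        (∑ k ∈ Finset.range n, dstar x k) / Real.log (n + 1) ≤ 1 / 2) ∧
      ¬ ∃ l : ℝ, Tendsto
        (fun n : ℕ => (∑ k ∈ Finset.range n, dstar x k) / Real.log (n + 1))
        atTop (nhds l) := by
  have hlog_pos {n : ℕ} (hn : 1 ≤ n) : 0 < Real.log (n + 1) :=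
    Real.log_pos (by norm_cast; omega)
  have hone (N : ℕ) : ∃ n ≥ N, 1 ≤ n ∧
      (∑ k ∈ Finset.range n, dstar logSecantSeq k) / Real.log (n + 1) = 1 := by
    have : N + 1 ≤ breakpoint (N + 1) := breakpoint_strictMono.le_apply
    refine ⟨breakpoint (N + 1), by omega, by omega, ?_⟩
    rw [sum_dstar_logSecantSeq, secantInterp_apply breakpoint_strictMono,
      div_self (hlog_pos (by omega)).ne']
  have hhalf (N : ℕ) : ∃ n ≥ N, 1 ≤ n ∧
      (∑ k ∈ Finset.range n, dstar logSecantSeq k) / Real.log (n + 1) ≤ 1 / 2 := by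
    have : N + 1 ≤ 2 ^ (4 * 8 ^ N) - 1 :=
      breakpoint_strictMono.le_apply.trans (breakpoint_succ_le N)
    refine ⟨2 ^ (4 * 8 ^ N) - 1, by omega, by omega, ?_⟩
    rw [sum_dstar_logSecantSeq, div_le_iff₀ (hlog_pos (by omega))]
    linarith [secantInterp_log_le_half N]
  refine ⟨logSecantSeq, logSecantSeq_nonneg, tendsto_logSecantSeq, fun n hn => ?_,
    hone, hhalf, fun ⟨l, hl⟩ => ?_⟩
  · rw [div_le_iff₀ (hlog_pos hn), sum_dstar_logSecantSeq, ← sum_logSecantSeq]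
    linarith [sum_logSecantSeq_le n, hlog_pos hn]
  · exact not_tendsto_of_frequently_le_of_frequently_ge (by norm_num : (1 / 2 : ℝ) < 1)
      (frequently_atTop.2 fun N => (hhalf N).imp fun _ h => ⟨h.1, h.2.2⟩)
      (frequently_atTop.2 fun N => (hone N).imp fun _ h => ⟨h.1, h.2.2.ge⟩) l hl
end
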